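/- arXiv:2509.16714 — 7 statements merged into one kernel-verified Lean document; each statement's English description precedes it below -/
import Mathlib

section
/- The polynomial P_N has exactly N roots in ℂ (it has degree N), all of which are real and simple, and they can be labeled a_1, …, a_N so that they interlace the numbers −r_j: −r_N < a_N < −r_{N−1} < a_{N−1} < ⋯ < −r_2 < a_2 < −r_1 < a_1. -/
open Polynomial

lemma exists_root_between (f : Polynomial ℝ) {x y : ℝ} (hxy : x < y)
    (h : f.eval x * f.eval y < 0) : ∃ z, x < z ∧ z < y ∧ f.eval z = 0 := by
  have hc : ContinuousOn (fun t => f.eval t) (Set.Icc x y) :=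
    (f.continuous).continuousOn
  rcases mul_neg_iff.mp h with ⟨h1, h2⟩ | ⟨h1, h2⟩
  · obtain ⟨z, hz, hz0⟩ := intermediate_value_Ioo' hxy.le hc (Set.mem_Ioo.mpr ⟨h2, h1⟩)
    exact ⟨z, hz.1, hz.2, hz0⟩
  · obtain ⟨z, hz, hz0⟩ := intermediate_value_Ioo hxy.le hc (Set.mem_Ioo.mpr ⟨h1, h2⟩)
    exact ⟨z, hz.1, hz.2, hz0⟩

lemma sign_prod_aux (N : ℕ) (r : Fin N → ℝ) (hrm : StrictMono r) (k : Fin N) :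
    0 < (-1 : ℝ) ^ (k : ℕ) * ∏ j ∈ Finset.univ.erase k, (r j - r k) := by
  have hsplit : Finset.univ.erase k = Finset.Iio k ∪ Finset.Ioi k := by
    ext j
    simp only [Finset.mem_erase, Finset.mem_union, Finset.mem_univ, and_true,
      Finset.mem_Iio, Finset.mem_Ioi]
    constructor
    · intro h; exact h.lt_or_gt
    · rintro (h | h)
      exacts [h.ne, h.ne']
  have hdisj : Disjoint (Finset.Iio k) (Finset.Ioi k) := by
    simp [Finset.disjoint_left]
    intro j hj; exact le_of_lt hj
  rw [hsplit, Finset.prod_union hdisj]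
  have h1 : ∏ j ∈ Finset.Iio k, (r j - r k) = (-1 : ℝ) ^ (k:ℕ) * ∏ j ∈ Finset.Iio k, (r k - r j) := by
    rw [← Fin.card_Iio k]
    rw [← Finset.prod_const (-1 : ℝ), ← Finset.prod_mul_distrib]
    apply Finset.prod_congr rfl
    intro j hj; ring
  rw [h1]
  have h2 : (0:ℝ) < ∏ j ∈ Finset.Iio k, (r k - r j) :=
    Finset.prod_pos fun j hj => sub_pos.mpr (hrm (Finset.mem_Iio.mp hj))
  have h3 : (0:ℝ) < ∏ j ∈ Finset.Ioi k, (r j - r k) :=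
    Finset.prod_pos fun j hj => sub_pos.mpr (hrm (Finset.mem_Ioi.mp hj))
  have h4 : ((-1 : ℝ) ^ (k:ℕ)) * ((-1 : ℝ) ^ (k:ℕ)) = 1 := by
    rw [← pow_add]; exact Even.neg_one_pow ⟨(k:ℕ), rfl⟩
  have := mul_pos h2 h3
  nlinarith [this, h4]

/-- The polynomial `P_N` has exactly `N` roots in `ℂ` (it has degree `N`),
all of which are real and simple, and they can be labeled `a 0, …, a (N-1)`
(with `a 0` the largest, i.e. `a_1` in the paper) so that they interlace the numbers `-r j`:
`-r_N < a_N < -r_{N-1} < a_{N-1} < ⋯ < -r_2 < a_2 < -r_1 < a_1`. -/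
theorem stmt_0 (N : ℕ) (hN : 0 < N) (r b : Fin N → ℝ)
    (hr : ∀ i, 0 < r i) (hrm : StrictMono r) (hb : ∀ i, 0 < b i)
    (D : ℝ) (hD : 0 < D)
    (P : Polynomial ℝ)
    (hP : P = C D * ∏ j, (X + C (r j)) -
      ∑ i, C (b i) * ∏ j ∈ Finset.univ.erase i, (X + C (r j))) :
    P.degree = N ∧
    ∃ a : Fin N → ℝ,
      (∀ j, -(r j) < a j) ∧
      (∀ j : Fin N, ∀ h : (j : ℕ) + 1 < N, a ⟨(j : ℕ) + 1, h⟩ < -(r j)) ∧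
      (P.map (algebraMap ℝ ℂ)).roots = Multiset.map (fun j => ((a j : ℝ) : ℂ)) Finset.univ.val ∧
      (P.map (algebraMap ℝ ℂ)).roots.Nodup := by
  -- the monic product
  set Q : Polynomial ℝ := ∏ j, (X + C (r j)) with hQ
  have hQm : Q.Monic := monic_prod_of_monic _ _ fun j _ => monic_X_add_C (r j)
  have hQd : Q.natDegree = N := by
    rw [hQ, natDegree_prod_of_monic _ _ fun j _ => monic_X_add_C (r j)]
    simp [natDegree_X_add_C]
  have hQdeg : Q.degree = (N : WithBot ℕ) := by
    rw [degree_eq_natDegree hQm.ne_zero, hQd]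
  set S : Polynomial ℝ := ∑ i, C (b i) * ∏ j ∈ Finset.univ.erase i, (X + C (r j)) with hS
  have hSd : S.degree < (N : WithBot ℕ) := by
    rw [hS]
    apply lt_of_le_of_lt (degree_sum_le _ _)
    rw [Finset.sup_lt_iff (by exact_mod_cast WithBot.bot_lt_coe N)]
    intro i _
    calc (C (b i) * ∏ j ∈ Finset.univ.erase i, (X + C (r j))).degree
        ≤ (C (b i)).degree + (∏ j ∈ Finset.univ.erase i, (X + C (r j))).degree :=
          degree_mul_le _ _
      _ ≤ 0 + ∑ j ∈ Finset.univ.erase i, (X + C (r j)).degree :=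
          add_le_add degree_C_le (degree_prod_le _ _)
      _ = ((N - 1 : ℕ) : WithBot ℕ) := by
          rw [zero_add]
          rw [Finset.sum_congr rfl fun j _ => degree_X_add_C (r j)]
          rw [Finset.sum_const, Finset.card_erase_of_mem (Finset.mem_univ i)]
          simp [Finset.card_univ]
      _ < (N : WithBot ℕ) := by
          exact_mod_cast Nat.sub_lt hN one_pos
  have hCDQ : (C D * Q).degree = (N : WithBot ℕ) := by
    rw [degree_C_mul hD.ne', hQdeg]
  have hPdeg : P.degree = (N : WithBot ℕ) := by
    rw [hP, degree_sub_eq_left_of_degree_lt (by rw [hCDQ]; exact hSd), hCDQ]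
  have hP0 : P ≠ 0 := fun h => by
    rw [h, degree_zero] at hPdeg
    exact (WithBot.bot_ne_coe) hPdeg
  have hPnat : P.natDegree = N := natDegree_eq_of_degree_eq_some hPdeg
  -- leading coefficient
  have hlead : P.leadingCoeff = D := by
    have h1 : P.coeff N = D := by
      rw [hP, coeff_sub, coeff_C_mul, coeff_eq_zero_of_degree_lt hSd, sub_zero]
      rw [← hQd, hQm.coeff_natDegree, mul_one]
    rwa [leadingCoeff, hPnat]
  -- evaluation at the points -(r k)
  have heval : ∀ k : Fin N,
      P.eval (-(r k)) = -(b k * ∏ j ∈ Finset.univ.erase k, (r j - r k)) := by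
    intro k
    rw [hP]
    simp only [hQ, hS, eval_sub, eval_mul, eval_C, eval_prod, eval_add, eval_X, eval_finset_sum]
    rw [Finset.prod_eq_zero (Finset.mem_univ k) (by ring : -r k + r k = 0), mul_zero]
    rw [Finset.sum_eq_single k]
    · rw [zero_sub, neg_inj]
      congr 1
      exact Finset.prod_congr rfl fun j _ => by ring
    · intro i _ hik
      rw [Finset.prod_eq_zero (Finset.mem_erase.mpr ⟨hik.symm, Finset.mem_univ k⟩)
        (by ring : -r k + r k = 0), mul_zero]
    · intro h; exact absurd (Finset.mem_univ k) h
  -- sign of the evaluation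
  have hsign : ∀ k : Fin N, 0 < (-1 : ℝ) ^ ((k : ℕ) + 1) * P.eval (-(r k)) := by
    intro k
    rw [heval k, pow_succ]
    have := sign_prod_aux N r hrm k
    have hbk := hb k
    nlinarith [this, hbk]
  -- a point far to the right where P is positive
  have htop : Filter.Tendsto (fun x => P.eval x) Filter.atTop Filter.atTop := by
    apply P.tendsto_atTop_of_leadingCoeff_nonneg
    · rw [hPdeg]; exact_mod_cast hN
    · rw [hlead]; exact hD.le
  obtain ⟨M, hM1, hM2⟩ : ∃ M, 0 < P.eval M ∧ -(r ⟨0, hN⟩) < M := by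
    have := (htop.eventually_gt_atTop 0).and (Filter.eventually_gt_atTop (-(r ⟨0, hN⟩)))
    exact this.exists
  -- existence of the interlaced roots
  have H : ∀ k : Fin N, ∃ x, -(r k) < x ∧
      (∀ h2 : 0 < (k : ℕ), x < -(r ⟨(k : ℕ) - 1, by omega⟩)) ∧ P.eval x = 0 := by
    intro k
    rcases Nat.eq_zero_or_pos (k : ℕ) with hk0 | hkpos
    · -- topmost root
      have hkeq : k = ⟨0, hN⟩ := by
        apply Fin.ext; simp [hk0]
      have he : P.eval (-(r k)) < 0 := by
        have := hsign k
        rw [hk0, pow_one] at this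
        linarith
      obtain ⟨z, hz1, hz2, hz3⟩ := exists_root_between P (hkeq ▸ hM2)
        (mul_neg_of_neg_of_pos he hM1)
      exact ⟨z, hz1, fun h2 => absurd hk0 (by omega), hz3⟩
    · -- root between -(r k) and -(r (k-1))
      set k' : Fin N := ⟨(k : ℕ) - 1, by omega⟩ with hk'
      have hk'k : k' < k := by
        rw [Fin.lt_def]; simp [hk']; omega
      have hlt : -(r k) < -(r k') := neg_lt_neg (hrm hk'k)
      have hmul : P.eval (-(r k)) * P.eval (-(r k')) < 0 := by
        have h1 := hsign k
        have h2 := hsign k'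
        have hodd : (-1 : ℝ) ^ ((k : ℕ) + 1) * (-1 : ℝ) ^ (((k' : ℕ)) + 1) = -1 := by
          rw [← pow_add]
          have : (k : ℕ) + 1 + ((k' : ℕ) + 1) = 2 * (k : ℕ) + 1 := by
            simp only [hk']; omega
          rw [this]
          exact Odd.neg_one_pow ⟨(k : ℕ), rfl⟩
        nlinarith [mul_pos h1 h2, hodd]
      obtain ⟨z, hz1, hz2, hz3⟩ := exists_root_between P hlt hmul
      exact ⟨z, hz1, fun _ => hz2, hz3⟩
  choose a ha1 ha2 ha3 using H
  -- a is strictly decreasing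
  have hanti : ∀ i j : Fin N, i < j → a j < a i := by
    intro i j hij
    have hjpos : 0 < (j : ℕ) := by
      have := hij
      rw [Fin.lt_def] at this
      omega
    have h1 : a j < -(r ⟨(j : ℕ) - 1, by omega⟩) := ha2 j hjpos
    have h2 : r i ≤ r ⟨(j : ℕ) - 1, by omega⟩ := by
      apply hrm.monotone
      rw [Fin.le_def]
      simp
      rw [Fin.lt_def] at hij
      omega
    linarith [ha1 i]
  have hainj : Function.Injective a := by
    intro i j hij
    by_contra hne
    rcases lt_or_gt_of_ne hne with h | h
    · exact absurd hij (ne_of_gt (hanti i j h))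
    · exact absurd hij (ne_of_lt (hanti j i h))
  -- the complex roots
  set f : Polynomial ℂ := P.map (algebraMap ℝ ℂ) with hf
  have hf0 : f ≠ 0 := by
    rw [hf, Polynomial.map_ne_zero_iff (algebraMap ℝ ℂ).injective]
    exact hP0
  have hfnat : f.natDegree = N := by
    rw [hf, natDegree_map_eq_of_injective (algebraMap ℝ ℂ).injective, hPnat]
  set m : Multiset ℂ := Multiset.map (fun j => ((a j : ℝ) : ℂ)) Finset.univ.val with hm
  have hmnodup : m.Nodup := by
    apply Multiset.Nodup.map
    · exact fun i j h => hainj (Complex.ofReal_injective h)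
    · exact Finset.univ.nodup
  have hmle : m ≤ f.roots := by
    rw [Multiset.le_iff_subset hmnodup]
    intro x hx
    rw [hm] at hx
    obtain ⟨j, _, rfl⟩ := Multiset.mem_map.mp hx
    rw [mem_roots hf0]
    exact Polynomial.IsRoot.map (ha3 j)
  have hcard : f.roots.card ≤ m.card := by
    calc f.roots.card ≤ f.natDegree := f.card_roots'
      _ = N := hfnat
      _ = m.card := by rw [hm, Multiset.card_map]; simp [← Finset.card_def]
  have hroots : f.roots = m := (Multiset.eq_of_le_of_card_le hmle hcard).symm
  refine ⟨hPdeg, a, ha1, ?_, ?_, ?_⟩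
  · intro j h
    have := ha2 ⟨(j : ℕ) + 1, h⟩ (by simp)
    have hje : (⟨((⟨(j : ℕ) + 1, h⟩ : Fin N) : ℕ) - 1, by omega⟩ : Fin N) = j := by
      apply Fin.ext; simp
    rwa [hje] at this
  · exact hroots
  · rw [hroots]; exact hmnodup
end

section
/- For every integer k ≥ 1 there exist real numbers a_1^k, …, a_N^k with −r_N < a_N^k < −r_{N−1} < a_{N−1}^k < ⋯ < −r_2 < a_2^k < −r_1 < a_1^k such that P_N^k(a_j^k) = 0 for each 1 ≤ j ≤ N, and each of these roots satisfies Σ_{i=1}^N b_i/(a_j^k + r_i) = D + (a_j^k)²/(2k−1)². -/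
open Polynomial Finset

lemma exists_root_of_mul_neg (f : ℝ → ℝ) (hf : Continuous f) {x y : ℝ} (hxy : x < y)
    (h : f x * f y < 0) : ∃ z ∈ Set.Ioo x y, f z = 0 := by
  rcases mul_neg_iff.mp h with ⟨hx, hy⟩ | ⟨hx, hy⟩
  · obtain ⟨z, hz, hz0⟩ := intermediate_value_Ioo' hxy.le hf.continuousOn
      (Set.mem_Ioo.mpr ⟨hy, hx⟩)
    exact ⟨z, hz, hz0⟩
  · obtain ⟨z, hz, hz0⟩ := intermediate_value_Ioo hxy.le hf.continuousOn
      (Set.mem_Ioo.mpr ⟨hx, hy⟩)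
    exact ⟨z, hz, hz0⟩

lemma erase_eq_union_aux (N : ℕ) (j : Fin N) :
    (Finset.univ.erase j) = Finset.Iio j ∪ Finset.Ioi j := by
  ext i
  simp only [mem_erase, mem_univ, and_true, mem_union, mem_Iio, mem_Ioi]
  exact ⟨fun h => lt_or_gt_of_ne h, fun h => h.elim ne_of_lt ne_of_gt⟩

/-- For every integer `k ≥ 1` there exist real numbers
`a_1^k, …, a_N^k` with `-r_N < a_N^k < -r_{N-1} < ⋯ < -r_1 < a_1^k`
(zero-based: `-(r j) < a j` for all `j`, and `a (j+1) < -(r j)`) such that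
`P_N^k(a_j^k) = 0` for each `j`, and each root satisfies
`∑ i, b i / (a_j^k + r i) = D + (a_j^k)² / (2k-1)²`. -/
theorem stmt_5 (N : ℕ) (hN : 0 < N) (r b : Fin N → ℝ)
    (hr : ∀ i, 0 < r i) (hrm : StrictMono r) (hb : ∀ i, 0 < b i)
    (D : ℝ) (hD : 0 < D)
    (Pk : ℕ → Polynomial ℝ)
    (hPk : ∀ k : ℕ, Pk k =
      (C D + C (((2 * (k : ℝ) - 1) ^ 2)⁻¹) * X ^ 2) * ∏ j, (X + C (r j)) -
      ∑ i, C (b i) * ∏ j ∈ Finset.univ.erase i, (X + C (r j))) :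
    ∀ k : ℕ, 1 ≤ k →
      ∃ a : Fin N → ℝ,
        (∀ j, -(r j) < a j) ∧
        (∀ j : Fin N, ∀ h : (j : ℕ) + 1 < N, a ⟨(j : ℕ) + 1, h⟩ < -(r j)) ∧
        (∀ j, (Pk k).eval (a j) = 0) ∧
        (∀ j, ∑ i, b i / (a j + r i) = D + (a j) ^ 2 / (2 * (k : ℝ) - 1) ^ 2) := by
  classical
  intro k hk
  have hk' : (1:ℝ) ≤ (k:ℝ) := by exact_mod_cast hk
  set c : ℝ := 2 * (k:ℝ) - 1 with hc_def
  have hc0 : (0:ℝ) < c := by rw [hc_def]; linarith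
  have hc2 : (0:ℝ) < c ^ 2 := by positivity
  set F : ℝ → ℝ := fun x => (Pk k).eval x with hF_def
  have hFcont : Continuous F := (Pk k).continuous
  have hFeval : ∀ x, F x =
      (D + (c ^ 2)⁻¹ * x ^ 2) * ∏ j, (x + r j) -
        ∑ i, b i * ∏ j ∈ Finset.univ.erase i, (x + r j) := by
    intro x
    simp [hF_def, hPk k, eval_prod, eval_finset_sum, hc_def]
  -- key factorization
  have key : ∀ x : ℝ, (∀ i, x + r i ≠ 0) →
      F x = (∏ i, (x + r i)) *
        ((D + (c ^ 2)⁻¹ * x ^ 2) - ∑ i, b i / (x + r i)) := by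
    intro x hx
    rw [hFeval x, mul_sub, Finset.mul_sum]
    congr 1
    · ring
    · refine Finset.sum_congr rfl fun i _ => ?_
      rw [← Finset.mul_prod_erase _ _ (Finset.mem_univ i),
        mul_comm (x + r i), mul_assoc,
        show (x + r i) * (b i / (x + r i)) = b i from by
          rw [mul_comm, div_mul_cancel₀ _ (hx i)], mul_comm]
  -- sign at -(r j)
  have hsign : ∀ j : Fin N, (-1:ℝ) ^ (j:ℕ) * F (-(r j)) < 0 := by
    intro j
    have hzero : (∏ i, (-(r j) + r i)) = 0 :=
      Finset.prod_eq_zero (Finset.mem_univ j) (by ring)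
    have hsum : (∑ i, b i * ∏ m ∈ Finset.univ.erase i, (-(r j) + r m)) =
        b j * ∏ m ∈ Finset.univ.erase j, (r m - r j) := by
      rw [Finset.sum_eq_single j]
      · congr 1
        exact Finset.prod_congr rfl fun m _ => by ring
      · intro m _ hm
        have hjm : j ∈ Finset.univ.erase m :=
          Finset.mem_erase.mpr ⟨Ne.symm hm, Finset.mem_univ j⟩
        rw [Finset.prod_eq_zero hjm (by ring), mul_zero]
      · intro h; exact absurd (Finset.mem_univ j) h
    have hF : F (-(r j)) = -(b j * ∏ m ∈ Finset.univ.erase j, (r m - r j)) := by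
      rw [hFeval, hzero, mul_zero, zero_sub, hsum]
    have hP : (0:ℝ) < (-1:ℝ) ^ (j:ℕ) * ∏ m ∈ Finset.univ.erase j, (r m - r j) := by
      have hdisj : Disjoint (Finset.Iio j) (Finset.Ioi j) :=
        Finset.disjoint_left.mpr fun i hi hi' =>
          absurd (Finset.mem_Ioi.mp hi') (not_lt.mpr (le_of_lt (Finset.mem_Iio.mp hi)))
      rw [erase_eq_union_aux, Finset.prod_union hdisj]
      have h1 : ∏ m ∈ Finset.Iio j, (r m - r j) =
          (-1:ℝ) ^ (j:ℕ) * ∏ m ∈ Finset.Iio j, (r j - r m) := by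
        calc ∏ m ∈ Finset.Iio j, (r m - r j)
            = ∏ m ∈ Finset.Iio j, (-1:ℝ) * (r j - r m) :=
              Finset.prod_congr rfl fun m _ => by ring
          _ = (∏ _m ∈ Finset.Iio j, (-1:ℝ)) * ∏ m ∈ Finset.Iio j, (r j - r m) :=
              Finset.prod_mul_distrib
          _ = (-1:ℝ) ^ (j:ℕ) * ∏ m ∈ Finset.Iio j, (r j - r m) := by
              rw [Finset.prod_const, Fin.card_Iio]
      have h2 : 0 < ∏ m ∈ Finset.Iio j, (r j - r m) :=
        Finset.prod_pos fun m hm => sub_pos.mpr (hrm (Finset.mem_Iio.mp hm))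
      have h3 : 0 < ∏ m ∈ Finset.Ioi j, (r m - r j) :=
        Finset.prod_pos fun m hm => sub_pos.mpr (hrm (Finset.mem_Ioi.mp hm))
      have h5 : (-1:ℝ) ^ (j:ℕ) * (-1:ℝ) ^ (j:ℕ) = 1 := by
        rw [← pow_add]
        exact Even.neg_one_pow ⟨(j:ℕ), rfl⟩
      have h6 : (-1:ℝ) ^ (j:ℕ) *
          (((-1:ℝ) ^ (j:ℕ) * ∏ m ∈ Finset.Iio j, (r j - r m)) *
            ∏ m ∈ Finset.Ioi j, (r m - r j)) =
          (∏ m ∈ Finset.Iio j, (r j - r m)) * ∏ m ∈ Finset.Ioi j, (r m - r j) := by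
        rw [← mul_assoc, ← mul_assoc, h5, one_mul]
      rw [h1, h6]
      exact mul_pos h2 h3
    rw [hF]
    have heq : (-1:ℝ) ^ (j:ℕ) * -(b j * ∏ m ∈ Finset.univ.erase j, (r m - r j)) =
        -(b j * ((-1:ℝ) ^ (j:ℕ) * ∏ m ∈ Finset.univ.erase j, (r m - r j))) := by ring
    rw [heq]
    exact neg_lt_zero.mpr (mul_pos (hb j) hP)
  -- the large point M
  have hNe : Nonempty (Fin N) := Fin.pos_iff_nonempty.mp hN
  set S : ℝ := ∑ i, b i with hS_def
  have hS : 0 < S := Finset.sum_pos (fun i _ => hb i) Finset.univ_nonempty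
  set M : ℝ := S / D + 1 with hM_def
  have hM0 : (0:ℝ) < M := by rw [hM_def]; positivity
  have hFM : 0 < F M := by
    have hx : ∀ i, M + r i ≠ 0 := fun i => ne_of_gt (by have := hr i; linarith)
    rw [key M hx]
    refine mul_pos (Finset.prod_pos fun i _ => by have := hr i; linarith) ?_
    have hlt : ∑ i, b i / (M + r i) < D := by
      have hle : ∑ i, b i / (M + r i) ≤ ∑ i, b i / M := by
        gcongr with i
        all_goals first
          | exact (hb i).le
          | exact hM0
          | (have := hr i; linarith)
      have hsum : (∑ i, b i / M) = S / M := by rw [hS_def, Finset.sum_div]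
      have hSM : S / M < D := by
        rw [div_lt_iff₀ hM0]
        have : D * M = S + D := by rw [hM_def]; field_simp
        rw [this]; linarith
      calc ∑ i, b i / (M + r i) ≤ ∑ i, b i / M := hle
        _ = S / M := hsum
        _ < D := hSM
    have hpos : 0 ≤ (c ^ 2)⁻¹ * M ^ 2 := by positivity
    linarith
  -- upper endpoints
  set u : Fin N → ℝ := fun j =>
    if h : (j:ℕ) = 0 then M
    else -(r ⟨(j:ℕ) - 1, lt_of_le_of_lt (Nat.sub_le _ _) j.isLt⟩) with hu_def
  have hu_lt : ∀ j, -(r j) < u j := by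
    intro j
    by_cases h : (j:ℕ) = 0
    · rw [hu_def]; simp only []; rw [dif_pos h]
      have := hr j; linarith
    · rw [hu_def]; simp only []; rw [dif_neg h]
      have hlt : (⟨(j:ℕ) - 1, lt_of_le_of_lt (Nat.sub_le _ _) j.isLt⟩ : Fin N) < j := by
        rw [Fin.lt_def]; simp only []; omega
      exact neg_lt_neg (hrm hlt)
  have hsign_u : ∀ j, F (-(r j)) * F (u j) < 0 := by
    intro j
    by_cases h : (j:ℕ) = 0
    · have h1 := hsign j
      rw [h, pow_zero, one_mul] at h1
      rw [hu_def]; simp only []; rw [dif_pos h]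
      exact mul_neg_of_neg_of_pos h1 hFM
    · rw [hu_def]; simp only []; rw [dif_neg h]
      set j' : Fin N := ⟨(j:ℕ) - 1, lt_of_le_of_lt (Nat.sub_le _ _) j.isLt⟩ with hj'
      have h1 := hsign j
      have h2 := hsign j'
      have hj'c : ((j':ℕ)) = (j:ℕ) - 1 := rfl
      rcases Nat.even_or_odd (j:ℕ) with he | ho
      · have ho' : Odd ((j':ℕ)) := by rw [hj'c]; rcases he with ⟨m, hm⟩; exact ⟨m - 1, by omega⟩
        rw [he.neg_one_pow, one_mul] at h1
        rw [ho'.neg_one_pow] at h2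
        exact mul_neg_of_neg_of_pos h1 (by linarith)
      · have he' : Even ((j':ℕ)) := by rw [hj'c]; rcases ho with ⟨m, hm⟩; exact ⟨m, by omega⟩
        rw [ho.neg_one_pow] at h1
        rw [he'.neg_one_pow, one_mul] at h2
        exact mul_neg_of_pos_of_neg (by linarith) h2
  -- choose the roots
  choose a ha using fun j : Fin N =>
    exists_root_of_mul_neg F hFcont (hu_lt j) (hsign_u j)
  refine ⟨a, fun j => (ha j).1.1, ?_, fun j => (ha j).2, ?_⟩
  · intro j h
    have h2 := (ha ⟨(j:ℕ) + 1, h⟩).1.2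
    have hu : u ⟨(j:ℕ) + 1, h⟩ = -(r j) := by
      rw [hu_def]; simp only []; rw [dif_neg (by simp)]
      congr 1
    rwa [hu] at h2
  · intro j
    have hF0 := (ha j).2
    have hne : ∀ i, a j + r i ≠ 0 := by
      intro i
      rcases le_or_gt j i with hji | hij
      · have hri : r j ≤ r i := hrm.monotone hji
        have h1 := (ha j).1.1
        exact ne_of_gt (by linarith)
      · have hj0 : (j:ℕ) ≠ 0 := by
          have : (i:ℕ) < (j:ℕ) := hij
          omega
        have h2 := (ha j).1.2
        have hu : u j = -(r ⟨(j:ℕ) - 1, lt_of_le_of_lt (Nat.sub_le _ _) j.isLt⟩) := by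
          rw [hu_def]; simp only []; rw [dif_neg hj0]
        have hri : r i ≤ r ⟨(j:ℕ) - 1, lt_of_le_of_lt (Nat.sub_le _ _) j.isLt⟩ := by
          apply hrm.monotone
          rw [Fin.le_def]
          simp only []
          have : (i:ℕ) < (j:ℕ) := hij
          omega
        rw [hu] at h2
        exact ne_of_lt (by linarith)
    have hkey := key (a j) hne
    rw [hF0] at hkey
    have hPne : (∏ i, (a j + r i)) ≠ 0 :=
      Finset.prod_ne_zero_iff.mpr fun i _ => hne i
    have hz : (D + (c ^ 2)⁻¹ * (a j) ^ 2) - ∑ i, b i / (a j + r i) = 0 := by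
      rcases mul_eq_zero.mp hkey.symm with h | h
      · exact absurd h hPne
      · exact h
    have hdiv : (a j) ^ 2 / c ^ 2 = (c ^ 2)⁻¹ * (a j) ^ 2 := by
      rw [div_eq_mul_inv, mul_comm]
    rw [hdiv]
    linarith
end

section
/- For every integer k ≥ 1 and every real number λ with λ ≤ −r_N, one has (−1)^N · P_N^k(λ) > 0; in particular P_N^k has no real roots in the interval (−∞, −r_N]. -/
open Polynomial

/-- For every integer `k ≥ 1` and every real `λ ≤ -r_N`, one has
`(-1)^N * P_N^k(λ) > 0`; in particular `P_N^k` has no real roots in `(-∞, -r_N]`. -/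
theorem stmt_6 (N : ℕ) (hN : 0 < N) (r b : Fin N → ℝ)
    (hr : ∀ i, 0 < r i) (hrm : StrictMono r) (hb : ∀ i, 0 < b i)
    (D : ℝ) (hD : 0 < D)
    (Pk : ℕ → Polynomial ℝ)
    (hPk : ∀ k : ℕ, Pk k =
      (C D + C (((2 * (k : ℝ) - 1) ^ 2)⁻¹) * X ^ 2) * ∏ j, (X + C (r j)) -
      ∑ i, C (b i) * ∏ j ∈ Finset.univ.erase i, (X + C (r j))) :
    ∀ k : ℕ, 1 ≤ k → ∀ lam : ℝ, lam ≤ -(r ⟨N - 1, by omega⟩) →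
      0 < (-1 : ℝ) ^ N * (Pk k).eval lam ∧ (Pk k).eval lam ≠ 0 := by
  intro k hk lam hlam
  set m : Fin N := ⟨N - 1, by omega⟩ with hm
  have hle : ∀ j : Fin N, r j ≤ r m := by
    intro j
    exact hrm.monotone (by
      show j ≤ m
      have := j.isLt
      exact Fin.mk_le_mk.mpr (by omega) |>.trans_eq rfl |>.trans_eq rfl |>.trans_eq rfl
      )
  have hfac : ∀ j : Fin N, 0 ≤ -(lam + r j) := by
    intro j; have := hle j; linarith
  have hA : 0 < D + ((2 * (k:ℝ) - 1) ^ 2)⁻¹ * lam ^ 2 := by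
    have h1 : (0:ℝ) ≤ ((2 * (k:ℝ) - 1) ^ 2)⁻¹ * lam ^ 2 := by positivity
    linarith
  set A : ℝ := D + ((2 * (k:ℝ) - 1) ^ 2)⁻¹ * lam ^ 2 with hAdef
  have heval : (Pk k).eval lam =
      A * ∏ j, (lam + r j)
      - ∑ i, b i * ∏ j ∈ Finset.univ.erase i, (lam + r j) := by
    simp [hPk, hAdef, eval_prod, eval_finset_sum]
  have hneg : ∀ (s : Finset (Fin N)), ∏ j ∈ s, (-(lam + r j)) =
      (-1:ℝ) ^ s.card * ∏ j ∈ s, (lam + r j) := by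
    intro s
    rw [← Finset.prod_const, ← Finset.prod_mul_distrib]
    exact Finset.prod_congr rfl (fun j _ => by ring)
  have hcard : (Finset.univ : Finset (Fin N)).card = N := by simp
  have hcard' : ∀ i : Fin N, (Finset.univ.erase i).card = N - 1 := by
    intro i
    rw [Finset.card_erase_of_mem (Finset.mem_univ i), hcard]
  have hpow : (-1:ℝ) ^ N = (-1:ℝ) ^ (N - 1) * (-1) := by
    rw [← pow_succ]
    congr 1
    omega
  have hkey : (-1:ℝ) ^ N * (Pk k).eval lam =
      A * ∏ j, (-(lam + r j))
      + ∑ i, b i * ∏ j ∈ Finset.univ.erase i, (-(lam + r j)) := by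
    rw [heval, hneg Finset.univ, hcard]
    have hs : ∑ i, b i * ∏ j ∈ Finset.univ.erase i, (-(lam + r j)) =
        (-1:ℝ) ^ (N - 1) * ∑ i, b i * ∏ j ∈ Finset.univ.erase i, (lam + r j) := by
      rw [Finset.mul_sum]
      refine Finset.sum_congr rfl (fun i _ => ?_)
      rw [hneg, hcard' i]
      ring
    rw [hs, hpow]
    ring
  have hQnn : 0 ≤ ∏ j, (-(lam + r j)) :=
    Finset.prod_nonneg (fun j _ => hfac j)
  have hTnn : ∀ i : Fin N, 0 ≤ b i * ∏ j ∈ Finset.univ.erase i, (-(lam + r j)) := by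
    intro i
    exact mul_nonneg (hb i).le (Finset.prod_nonneg (fun j _ => hfac j))
  have hSnn : 0 ≤ ∑ i, b i * ∏ j ∈ Finset.univ.erase i, (-(lam + r j)) :=
    Finset.sum_nonneg (fun i _ => hTnn i)
  have hpos : 0 < (-1:ℝ) ^ N * (Pk k).eval lam := by
    rcases lt_or_eq_of_le hlam with hlt | heq
    · -- lam < -(r m) : all factors strictly positive
      have hQ : 0 < ∏ j, (-(lam + r j)) := by
        apply Finset.prod_pos
        intro j _
        have := hle j
        linarith
      rw [hkey]
      have := mul_pos hA hQ
      linarith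
    · -- lam = -(r m) : the m-th term of the sum is strictly positive
      have hQm : 0 < ∏ j ∈ Finset.univ.erase m, (-(lam + r j)) := by
        apply Finset.prod_pos
        intro j hj
        have hjm : j ≠ m := (Finset.mem_erase.mp hj).1
        have hjlt : j < m := by
          refine lt_of_le_of_ne ?_ hjm
          show j ≤ m
          have := j.isLt
          exact Fin.mk_le_mk.mpr (by omega)
        have hrj : r j < r m := hrm hjlt
        linarith
      have hterm : 0 < b m * ∏ j ∈ Finset.univ.erase m, (-(lam + r j)) :=
        mul_pos (hb m) hQm
      have hle' : b m * ∏ j ∈ Finset.univ.erase m, (-(lam + r j)) ≤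
          ∑ i, b i * ∏ j ∈ Finset.univ.erase i, (-(lam + r j)) :=
        Finset.single_le_sum (fun i _ => hTnn i) (Finset.mem_univ m)
      rw [hkey]
      have := mul_nonneg hA.le hQnn
      linarith
  refine ⟨hpos, fun h => ?_⟩
  rw [h, mul_zero] at hpos
  exact lt_irrefl 0 hpos
end

section
/- There exists k_0 ≥ 1 such that for every integer k ≥ k_0 the polynomial P_N^k has exactly N real roots, all simple, which can be labeled a_1^k, …, a_N^k so that −r_N < a_N^k < −r_{N−1} < a_{N−1}^k < ⋯ < −r_2 < a_2^k < −r_1 < a_1^k, and its remaining two roots form a simple conjugate pair of nonreal complex numbers. Moreover, for each 1 ≤ j ≤ N, a_j^k → a_j as k → ∞, where a_1 > a_2 > ⋯ > a_N are the N real roots of P_N. -/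
/-!
Away from the poles `-r i`, `P_ε(x) = ∏ j, (x + r j) * F_ε(x)` with the secular function
`F_ε(x) = D + ε x² - ∑ i, b i / (x + r i)`, where `ε = 1 / (2k - 1)²`. The values of `P_ε` at the
poles alternate in sign and `P_ε` is positive far to the right, so by the intermediate value
theorem each gap between consecutive poles, and the half-line to the right of `-r 1`, contains a
real root; to the left of all poles and far to the right `F_ε > 0`, so there are no other real
roots. On these bounded gaps `F_0` increases at a linear rate `κ > 0`, which the perturbation
`ε x²` does not destroy for small `ε`: hence each gap contains exactly one root, it is simple, and
it lies within `O(ε / κ)` of the corresponding root of `P_0`. For `ε > 0` the degree is `N + 2`,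
so the two remaining complex roots form a pair of nonreal conjugates.
-/

open Polynomial Complex Filter Finset Topology

theorem exists_pos_forall_le {ι : Type*} [Finite ι] {f : ι → ℝ} (hf : ∀ i, 0 < f i) :
    ∃ c > 0, ∀ i, c ≤ f i := by
  cases isEmpty_or_nonempty ι
  · exact ⟨1, one_pos, fun i => isEmptyElim i⟩
  · obtain ⟨i, hi⟩ := Finite.exists_min f
    exact ⟨f i, hf i, hi⟩

theorem exists_isRoot_mem_Ioo_of_mul_neg (p : ℝ[X]) {u v : ℝ} (huv : u ≤ v)
    (h : p.eval u * p.eval v < 0) : ∃ x ∈ Set.Ioo u v, p.IsRoot x := by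
  rcases mul_neg_iff.1 h with ⟨hu, hv⟩ | ⟨hu, hv⟩
  · exact intermediate_value_Ioo' huv p.continuous.continuousOn ⟨hv, hu⟩
  · exact intermediate_value_Ioo huv p.continuous.continuousOn ⟨hu, hv⟩

theorem rootMultiplicity_le_one_of_linear_growth {p : ℝ[X]} {x₀ κ : ℝ} (hκ : 0 < κ)
    (h : ∀ᶠ y in 𝓝[>] x₀, κ * (y - x₀) ≤ |p.eval y|) : p.rootMultiplicity x₀ ≤ 1 := by
  by_contra! h2
  obtain ⟨R, hR⟩ : (X - C x₀) ^ 2 ∣ p :=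
    (pow_dvd_pow _ h2).trans (pow_rootMultiplicity_dvd p x₀)
  have hlim : Tendsto (fun y => (y - x₀) * |R.eval y|) (𝓝[>] x₀) (𝓝 0) := by
    have : Continuous fun y => (y - x₀) * |R.eval y| := by fun_prop
    simpa using (this.tendsto x₀).mono_left nhdsWithin_le_nhds
  have hev : ∀ᶠ y in 𝓝[>] x₀, κ ≤ (y - x₀) * |R.eval y| := by
    filter_upwards [h, self_mem_nhdsWithin] with y hy hyx
    have hpos : 0 < y - x₀ := sub_pos.2 hyx
    rw [hR, eval_mul, abs_mul, eval_pow, eval_sub, eval_X, eval_C, abs_pow,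
      abs_of_pos hpos] at hy
    nlinarith
  linarith [ge_of_tendsto hlim hev]

theorem isRoot_map_conj {p : ℝ[X]} {z : ℂ} (hz : (p.map (algebraMap ℝ ℂ)).IsRoot z) :
    (p.map (algebraMap ℝ ℂ)).IsRoot (starRingEnd ℂ z) := by
  rw [IsRoot, eval_map_algebraMap] at hz ⊢
  rw [show starRingEnd ℂ z = conjAe z from rfl, aeval_algHom_apply, hz, map_zero]

theorem roots_map_complex_eq_add_conj_pair {n : ℕ} {p : ℝ[X]} (hdeg : p.natDegree = n + 2)
    {ρ : Fin n → ℝ} (hρ : Function.Injective ρ) (hroots : p.roots = univ.val.map ρ) :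
    ∃ x y : ℝ, y ≠ 0 ∧
      (p.map (algebraMap ℝ ℂ)).roots =
        univ.val.map (fun j => ((ρ j : ℝ) : ℂ)) + {(x : ℂ) + (y : ℂ) * I, (x : ℂ) - (y : ℂ) * I} ∧
      (p.map (algebraMap ℝ ℂ)).roots.Nodup := by
  classical
  set q := p.map (algebraMap ℝ ℂ)
  have hinj : Function.Injective (algebraMap ℝ ℂ) := (algebraMap ℝ ℂ).injective
  have hqdeg : q.natDegree = n + 2 := by rw [natDegree_map, hdeg]
  have hq : q ≠ 0 := fun h => by simp [h] at hqdeg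
  obtain ⟨R, hR⟩ := Multiset.le_iff_exists_add.1 (map_roots_le_of_injective p hinj)
  have hS : p.roots.map (algebraMap ℝ ℂ) = univ.val.map (fun j => ((ρ j : ℝ) : ℂ)) := by
    rw [hroots, Multiset.map_map]
    rfl
  have hRcard : Multiset.card R = 2 := by
    have := congrArg Multiset.card hR
    rw [IsAlgClosed.card_roots_eq_natDegree, hqdeg, Multiset.card_add, hS, Multiset.card_map,
      card_val, card_univ, Fintype.card_fin] at this
    omega
  -- a real root of `q` has the same multiplicity as a root of `p`, so none is left in `R`
  have hRim : ∀ z ∈ R, z.im ≠ 0 := by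
    intro z hz him
    have hcount := eq_rootMultiplicity_map hinj z.re (p := p)
    rw [← count_roots, ← count_roots, ← Multiset.count_map_eq_count' _ _ hinj, hR,
      Multiset.count_add] at hcount
    have : 0 < R.count (algebraMap ℝ ℂ z.re) := by
      rw [Multiset.count_pos, show algebraMap ℝ ℂ z.re = z from Complex.ext rfl (by simp [him])]
      exact hz
    omega
  obtain ⟨u, v, rfl⟩ := Multiset.card_eq_two.1 hRcard
  have hu : u.im ≠ 0 := hRim u (by simp)
  have hconj : starRingEnd ℂ u ∈ q.roots := by
    rw [mem_roots hq]
    exact isRoot_map_conj ((mem_roots hq).1 (by rw [hR]; simp))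
  have hconj_ne : starRingEnd ℂ u ≠ u := fun h => hu (conj_eq_iff_im.1 h)
  have hv : v = starRingEnd ℂ u := by
    rw [hR, Multiset.mem_add] at hconj
    rcases hconj with h | h
    · obtain ⟨x, -, hx⟩ := Multiset.mem_map.1 h
      exact absurd (by simpa using congrArg Complex.im hx.symm) hu
    · simp only [Multiset.insert_eq_cons, Multiset.mem_cons, Multiset.mem_singleton] at h
      exact (h.resolve_left hconj_ne).symm
  refine ⟨u.re, u.im, hu, ?_, ?_⟩
  · have hpair : (↑u.re - ↑u.im * I : ℂ) = starRingEnd ℂ u := Complex.ext (by simp) (by simp)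
    rw [hR, hS, hv, re_add_im, hpair]
  · rw [hR, hv]
    refine (Multiset.Nodup.add_iff (hroots ▸ (univ.nodup.map hρ).map hinj) ?_).2 ?_
    · simpa using hconj_ne.symm
    · rw [Multiset.disjoint_left]
      intro w hw hw'
      obtain ⟨x, -, rfl⟩ := Multiset.mem_map.1 hw
      simp only [Multiset.insert_eq_cons, Multiset.mem_cons, Multiset.mem_singleton] at hw'
      rcases hw' with h | h <;> apply_fun Complex.im at h <;> simp_all

theorem StrictAnti.eq_of_map_univ_val_eq {n : ℕ} {α : Type*} [LinearOrder α] {f g : Fin n → α}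
    (hf : StrictAnti f) (hg : StrictAnti g) (h : univ.val.map f = univ.val.map g) : f = g := by
  refine (hf.range_inj hg).1 (Set.ext fun x => ?_)
  simpa using congrArg (x ∈ ·) h

namespace Secular

variable {N : ℕ} (r b : Fin N → ℝ) (D ε : ℝ)

noncomputable def perturbedPoly : ℝ[X] :=
  (C D + C ε * X ^ 2) * ∏ j, (X + C (r j)) - ∑ i, C (b i) * ∏ j ∈ univ.erase i, (X + C (r j))

noncomputable def secularFn (x : ℝ) : ℝ := D + ε * x ^ 2 - ∑ i, b i / (x + r i)

noncomputable def rootBound : ℝ := (∑ i, b i) / D + 1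

/-- The gap `(-r m, -r (m - 1))` between consecutive poles; for `m = 0` it is cut off at
`rootBound`, to the right of which `secularFn` is positive. -/
def cell (m : Fin N) : Set ℝ := {x | -r m < x ∧ x < rootBound b D ∧ ∀ i < m, x < -r i}

variable {r b D ε}

theorem eval_perturbedPoly {x : ℝ} (hx : ∀ j, x + r j ≠ 0) :
    (perturbedPoly r b D ε).eval x = (∏ j, (x + r j)) * secularFn r b D ε x := by
  have key : ∀ i, b i * ∏ j ∈ univ.erase i, (x + r j) = (∏ j, (x + r j)) * (b i / (x + r i)) := by
    intro i
    rw [← mul_prod_erase univ _ (mem_univ i)]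
    field_simp [hx i]
  simp only [perturbedPoly, secularFn, eval_sub, eval_mul, eval_add, eval_pow, eval_X, eval_C,
    eval_prod, eval_finsetSum, key, ← mul_sum]
  ring

theorem isRoot_perturbedPoly_iff {x : ℝ} (hx : ∀ j, x + r j ≠ 0) :
    (perturbedPoly r b D ε).IsRoot x ↔ secularFn r b D ε x = 0 := by
  rw [IsRoot, eval_perturbedPoly hx, mul_eq_zero, or_iff_right (prod_ne_zero_iff.2 fun j _ => hx j)]

theorem eval_perturbedPoly_neg (m : Fin N) :
    (perturbedPoly r b D ε).eval (-r m) = -(b m * ∏ j ∈ univ.erase m, (r j - r m)) := by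
  simp only [perturbedPoly, eval_sub, eval_mul, eval_add, eval_pow, eval_X, eval_C, eval_prod,
    eval_finsetSum]
  rw [prod_eq_zero (mem_univ m) (by ring), mul_zero, zero_sub, sum_eq_single m]
  · congr 2
    exact prod_congr rfl fun j _ => by ring
  · intro i _ hi
    rw [prod_eq_zero (mem_erase.2 ⟨Ne.symm hi, mem_univ m⟩) (by ring), mul_zero]
  · exact fun h => absurd (mem_univ m) h

theorem neg_one_pow_mul_prod_pos (hrm : StrictMono r) (m : Fin N) :
    0 < (-1) ^ (m : ℕ) * ∏ j ∈ univ.erase m, (r j - r m) := by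
  have hsplit : univ.erase m = Iio m ∪ Ioi m := by
    ext j
    simp [eq_comm (a := j), lt_or_lt_iff_ne]
  have hIio : ∏ j ∈ Iio m, (r j - r m) = (-1) ^ (m : ℕ) * ∏ j ∈ Iio m, (r m - r j) := by
    rw [← Fin.card_Iio m, ← prod_neg]
    simp
  have hlow : 0 < ∏ j ∈ Iio m, (r m - r j) := prod_pos fun j hj => sub_pos.2 (hrm (mem_Iio.1 hj))
  have hhigh : 0 < ∏ j ∈ Ioi m, (r j - r m) := prod_pos fun j hj => sub_pos.2 (hrm (mem_Ioi.1 hj))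
  have hsq : ((-1 : ℝ) ^ (m : ℕ)) * (-1) ^ (m : ℕ) = 1 := by rw [← mul_pow]; norm_num
  rw [hsplit, prod_union (disjoint_left.2 fun j hj hj' => (mem_Iio.1 hj).not_gt (mem_Ioi.1 hj')),
    hIio]
  calc (0 : ℝ) < (∏ j ∈ Iio m, (r m - r j)) * ∏ j ∈ Ioi m, (r j - r m) := mul_pos hlow hhigh
    _ = _ := by linear_combination (-(∏ j ∈ Iio m, (r m - r j)) * ∏ j ∈ Ioi m, (r j - r m)) * hsq

theorem neg_one_pow_mul_eval_neg_lt (hrm : StrictMono r) (hb : ∀ i, 0 < b i) (m : Fin N) :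
    (-1) ^ (m : ℕ) * (perturbedPoly r b D ε).eval (-r m) < 0 := by
  rw [eval_perturbedPoly_neg]
  nlinarith [mul_pos (hb m) (neg_one_pow_mul_prod_pos hrm m)]

theorem natDegree_perturbedPoly (hε : ε ≠ 0) : (perturbedPoly r b D ε).natDegree = N + 2 := by
  have hmonic : ∀ s : Finset (Fin N), ∀ j ∈ s, (X + C (r j)).Monic := fun _ j _ => monic_X_add_C _
  have hQ : (∏ j, (X + C (r j))).natDegree = N := by
    simp [natDegree_prod_of_monic _ _ (hmonic univ)]
  have hlead : (C ε * X ^ 2 * ∏ j, (X + C (r j))).natDegree = N + 2 := by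
    rw [natDegree_mul (by simp [hε]) (monic_prod_of_monic _ _ (hmonic univ)).ne_zero,
      natDegree_C_mul_X_pow 2 ε hε, hQ, add_comm]
  have hrest : (C D * ∏ j, (X + C (r j)) -
      ∑ i, C (b i) * ∏ j ∈ univ.erase i, (X + C (r j))).natDegree ≤ N := by
    refine (natDegree_sub_le _ _).trans (max_le ((natDegree_C_mul_le _ _).trans hQ.le)
      (natDegree_sum_le_of_forall_le _ _ fun i _ => (natDegree_C_mul_le _ _).trans ?_))
    simp [natDegree_prod_of_monic _ _ (hmonic _)]
  rw [show perturbedPoly r b D ε = C ε * X ^ 2 * ∏ j, (X + C (r j)) + (C D * ∏ j, (X + C (r j)) -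
      ∑ i, C (b i) * ∏ j ∈ univ.erase i, (X + C (r j))) by unfold perturbedPoly; ring,
    natDegree_add_eq_left_of_natDegree_lt (by omega), hlead]

theorem secularFn_pos_of_forall_neg (hb : ∀ i, 0 < b i) (hD : 0 < D) (hε : 0 ≤ ε) {x : ℝ}
    (hx : ∀ i, x + r i < 0) : 0 < secularFn r b D ε x := by
  have : ∑ i, b i / (x + r i) ≤ 0 := sum_nonpos fun i _ => div_nonpos_of_nonneg_of_nonpos
    (hb i).le (hx i).le
  unfold secularFn
  nlinarith [sq_nonneg x]

theorem rootBound_pos (hb : ∀ i, 0 < b i) (hD : 0 < D) : 0 < rootBound b D := by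
  unfold rootBound
  have := sum_nonneg fun i (_ : i ∈ univ) => (hb i).le
  positivity

theorem secularFn_pos_of_rootBound_le (hr : ∀ i, 0 < r i) (hb : ∀ i, 0 < b i) (hD : 0 < D)
    (hε : 0 ≤ ε) {x : ℝ} (hx : rootBound b D ≤ x) : 0 < secularFn r b D ε x := by
  have hx0 : 0 < x := (rootBound_pos hb hD).trans_le hx
  have hsum : ∑ i, b i / (x + r i) ≤ (∑ i, b i) / x := by
    rw [sum_div]
    exact sum_le_sum fun i _ => div_le_div_of_nonneg_left (hb i).le hx0 (by linarith [hr i])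
  have hbound : (∑ i, b i) / x < D := by
    rw [div_lt_iff₀ hx0]
    have : D * rootBound b D = ∑ i, b i + D := by unfold rootBound; field_simp
    nlinarith
  unfold secularFn
  nlinarith [sq_nonneg x]

theorem eval_rootBound_pos (hr : ∀ i, 0 < r i) (hb : ∀ i, 0 < b i) (hD : 0 < D) (hε : 0 ≤ ε) :
    0 < (perturbedPoly r b D ε).eval (rootBound b D) := by
  have hpos : ∀ j, 0 < rootBound b D + r j := fun j => by linarith [hr j, rootBound_pos hb hD]
  rw [eval_perturbedPoly fun j => (hpos j).ne']
  exact mul_pos (prod_pos fun j _ => hpos j) (secularFn_pos_of_rootBound_le hr hb hD hε le_rfl)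

theorem perturbedPoly_ne_zero (hr : ∀ i, 0 < r i) (hb : ∀ i, 0 < b i) (hD : 0 < D)
    (hε : 0 ≤ ε) : perturbedPoly r b D ε ≠ 0 := fun h => by
  simpa [h] using eval_rootBound_pos hr hb hD hε

theorem exists_isRoot_mem_cell (hr : ∀ i, 0 < r i) (hrm : StrictMono r) (hb : ∀ i, 0 < b i)
    (hD : 0 < D) (hε : 0 ≤ ε) (m : Fin N) :
    ∃ x ∈ cell r b D m, (perturbedPoly r b D ε).IsRoot x := by
  have hM := rootBound_pos hb hD
  have hsign := neg_one_pow_mul_eval_neg_lt (D := D) (ε := ε) hrm hb m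
  rcases (m : ℕ).eq_zero_or_pos with hm0 | hm0
  · rw [hm0, pow_zero, one_mul] at hsign
    obtain ⟨x, hx, hroot⟩ := exists_isRoot_mem_Ioo_of_mul_neg _ (u := -r m)
      (v := rootBound b D) (by linarith [hr m])
      (mul_neg_of_neg_of_pos hsign (eval_rootBound_pos hr hb hD hε))
    exact ⟨x, ⟨hx.1, hx.2, fun i hi => absurd (Fin.lt_def.1 hi) (by omega)⟩, hroot⟩
  · set i : Fin N := ⟨m - 1, by omega⟩
    have hi : i < m := Fin.lt_def.2 (by simp only [i]; omega)
    have hsign' := neg_one_pow_mul_eval_neg_lt (D := D) (ε := ε) hrm hb i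
    have hpow : (-1 : ℝ) ^ (m : ℕ) = -(-1) ^ (i : ℕ) := by
      rw [show (m : ℕ) = i + 1 by simp only [i]; omega, pow_succ, mul_neg_one]
    have hsq : ((-1 : ℝ) ^ (i : ℕ)) * (-1) ^ (i : ℕ) = 1 := by rw [← mul_pow]; norm_num
    rw [hpow] at hsign
    obtain ⟨x, hx, hroot⟩ := exists_isRoot_mem_Ioo_of_mul_neg _ (u := -r m) (v := -r i)
      (by linarith [hrm hi]) (by nlinarith [mul_pos_of_neg_of_neg hsign hsign'])
    refine ⟨x, ⟨hx.1, by linarith [hr i, hx.2], fun j hj => ?_⟩, hroot⟩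
    have hji : r j ≤ r i := hrm.monotone (Fin.le_def.2 (by simp only [i]; omega))
    linarith [hx.2]

theorem mul_pos_of_mem_cell (hrm : StrictMono r) {m : Fin N} {x y : ℝ} (hx : x ∈ cell r b D m)
    (hy : y ∈ cell r b D m) (i : Fin N) : 0 < (x + r i) * (y + r i) := by
  rcases lt_or_ge i m with hi | hi
  · exact mul_pos_of_neg_of_neg (by linarith [hx.2.2 i hi]) (by linarith [hy.2.2 i hi])
  · have := hrm.monotone hi
    exact mul_pos (by linarith [hx.1]) (by linarith [hy.1])

theorem add_ne_zero_of_mem_cell (hrm : StrictMono r) {m : Fin N} {x : ℝ}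
    (hx : x ∈ cell r b D m) (i : Fin N) : x + r i ≠ 0 :=
  mul_self_pos.1 (mul_pos_of_mem_cell hrm hx hx i)

theorem strictAnti_of_mem_cell {ρ : Fin N → ℝ} (hρ : ∀ m, ρ m ∈ cell r b D m) : StrictAnti ρ :=
  fun i _ hij => ((hρ _).2.2 i hij).trans (hρ i).1

theorem isOpen_cell (m : Fin N) : IsOpen (cell r b D m) := by
  refine isOpen_iff_mem_nhds.2 fun x hx => ?_
  have hlt : ∀ᶠ y in 𝓝 x, ∀ i < m, y < -r i := eventually_all.2 fun i => by
    by_cases hi : i < m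
    · filter_upwards [eventually_lt_nhds (hx.2.2 i hi)] with y hy _ using hy
    · exact Eventually.of_forall fun y h => absurd h hi
  filter_upwards [eventually_gt_nhds hx.1, eventually_lt_nhds hx.2.1, hlt] with y h1 h2 h3
  exact ⟨h1, h2, h3⟩

theorem abs_le_of_mem_cell (hr : ∀ i, 0 < r i) (hb : ∀ i, 0 < b i) (hD : 0 < D) {m : Fin N}
    {x : ℝ} (hx : x ∈ cell r b D m) : |x| ≤ rootBound b D + ∑ i, r i := by
  have := rootBound_pos hb hD
  have := single_le_sum (fun i _ => (hr i).le) (mem_univ m)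
  have := sum_nonneg fun i (_ : i ∈ univ) => (hr i).le
  rw [abs_le]
  constructor <;> linarith [hx.1, hx.2.1, hr m]

theorem add_le_of_mem_cell (hr : ∀ i, 0 < r i) {m : Fin N} {x : ℝ} (hx : x ∈ cell r b D m) :
    x + r m ≤ rootBound b D + ∑ i, r i := by
  linarith [hx.2.1, single_le_sum (fun i _ => (hr i).le) (mem_univ m)]

theorem exists_mem_cell_of_isRoot (hr : ∀ i, 0 < r i) (hrm : StrictMono r) (hb : ∀ i, 0 < b i)
    (hD : 0 < D) (hε : 0 ≤ ε) {x : ℝ} (hroot : (perturbedPoly r b D ε).IsRoot x) :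
    ∃ m, x ∈ cell r b D m := by
  have hpole : ∀ j, x + r j ≠ 0 := fun j h => by
    rw [show x = -r j by linarith] at hroot
    exact (neg_one_pow_mul_eval_neg_lt hrm hb j).ne (by rw [hroot.eq_zero, mul_zero])
  have hF := (isRoot_perturbedPoly_iff hpole).1 hroot
  have hright : ∃ i, -r i < x := by
    by_contra! h
    exact (secularFn_pos_of_forall_neg hb hD hε fun i =>
      lt_of_le_of_ne (by linarith [h i]) (hpole i)).ne' hF
  obtain ⟨m, hm, hmin⟩ := wellFounded_lt.has_min {i | -r i < x} hright
  refine ⟨m, hm, ?_, fun i hi => ?_⟩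
  · by_contra! h
    exact (secularFn_pos_of_rootBound_le hr hb hD hε h).ne' hF
  · have : x ≤ -r i := not_lt.1 fun h => hmin i h hi
    exact lt_of_le_of_ne this fun h => hpole i (by linarith)

variable (r b D ε) in
def ExpandsOnCells (κ : ℝ) : Prop :=
  ∀ m x y, x ∈ cell r b D m → y ∈ cell r b D m → x ≤ y →
    κ * (y - x) ≤ secularFn r b D ε y - secularFn r b D ε x

theorem secularFn_sub {x y : ℝ} (hx : ∀ i, x + r i ≠ 0) (hy : ∀ i, y + r i ≠ 0) :
    secularFn r b D ε y - secularFn r b D ε x =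
      (y - x) * (ε * (x + y) + ∑ i, b i / ((x + r i) * (y + r i))) := by
  have hterm : ∀ i, (y - x) * (b i / ((x + r i) * (y + r i))) = b i / (x + r i) - b i / (y + r i) :=
    fun i => by field_simp [hx i, hy i]; ring
  rw [mul_add, mul_sum]
  simp only [secularFn, hterm, sum_sub_distrib]
  ring

theorem exists_expandsOnCells (hr : ∀ i, 0 < r i) (hrm : StrictMono r) (hb : ∀ i, 0 < b i)
    (hD : 0 < D) : ∃ κ > 0, ∃ ε₀ > 0, ∀ ε, 0 ≤ ε → ε ≤ ε₀ → ExpandsOnCells r b D ε κ := by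
  obtain ⟨c, hc, hcb⟩ := exists_pos_forall_le hb
  set L := rootBound b D + ∑ i, r i
  have hL : 0 < L := by
    linarith [rootBound_pos hb hD, sum_nonneg fun i (_ : i ∈ univ) => (hr i).le]
  refine ⟨c / (2 * L ^ 2), by positivity, c / (4 * L ^ 3), by positivity,
    fun ε hε0 hε m x y hx hy hxy => ?_⟩
  rw [secularFn_sub (add_ne_zero_of_mem_cell hrm hx) (add_ne_zero_of_mem_cell hrm hy), mul_comm]
  refine mul_le_mul_of_nonneg_left ?_ (sub_nonneg.2 hxy)
  have hxm : 0 < x + r m := by linarith [hx.1]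
  have hym : 0 < y + r m := by linarith [hy.1]
  have hsum : c / L ^ 2 ≤ ∑ i, b i / ((x + r i) * (y + r i)) :=
    calc c / L ^ 2 ≤ b m / ((x + r m) * (y + r m)) := by
          rw [sq]
          exact div_le_div₀ (hb m).le (hcb m) (mul_pos hxm hym)
            (mul_le_mul (add_le_of_mem_cell hr hx) (add_le_of_mem_cell hr hy) hym.le hL.le)
      _ ≤ _ := single_le_sum (fun i _ => div_nonneg (hb i).le
          (mul_pos_of_mem_cell hrm hx hy i).le) (mem_univ m)
  -- the quadratic perturbation costs at most `2 L ε ≤ c / (2 L²)`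
  have hquad : -(c / (2 * L ^ 2)) ≤ ε * (x + y) := by
    have hxy' : -(2 * L) ≤ x + y := by
      linarith [(abs_le.1 (abs_le_of_mem_cell hr hb hD hx)).1,
        (abs_le.1 (abs_le_of_mem_cell hr hb hD hy)).1]
    have h2 : 2 * L * ε ≤ c / (2 * L ^ 2) :=
      calc 2 * L * ε ≤ 2 * L * (c / (4 * L ^ 3)) := by gcongr
        _ = c / (2 * L ^ 2) := by field_simp; ring
    nlinarith [mul_le_mul_of_nonneg_left hxy' hε0]
  have : c / L ^ 2 = 2 * (c / (2 * L ^ 2)) := by field_simp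
  linarith

theorem ExpandsOnCells.mul_abs_sub_le {κ : ℝ} (h : ExpandsOnCells r b D ε κ) {m : Fin N}
    {x y : ℝ} (hx : x ∈ cell r b D m) (hy : y ∈ cell r b D m) :
    κ * |y - x| ≤ |secularFn r b D ε y - secularFn r b D ε x| := by
  rcases le_total x y with hxy | hxy
  · have := h m x y hx hy hxy
    rw [abs_of_nonneg (sub_nonneg.2 hxy)]
    exact this.trans (le_abs_self _)
  · have := h m y x hy hx hxy
    rw [abs_sub_comm, abs_of_nonneg (sub_nonneg.2 hxy), abs_sub_comm]
    exact this.trans (le_abs_self _)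

theorem ExpandsOnCells.eq_of_isRoot {κ : ℝ} (h : ExpandsOnCells r b D ε κ) (hκ : 0 < κ)
    (hrm : StrictMono r) {m : Fin N} {x y : ℝ} (hx : x ∈ cell r b D m) (hy : y ∈ cell r b D m)
    (hxroot : (perturbedPoly r b D ε).IsRoot x) (hyroot : (perturbedPoly r b D ε).IsRoot y) :
    x = y := by
  have := h.mul_abs_sub_le hx hy
  rw [(isRoot_perturbedPoly_iff (add_ne_zero_of_mem_cell hrm hx)).1 hxroot,
    (isRoot_perturbedPoly_iff (add_ne_zero_of_mem_cell hrm hy)).1 hyroot, sub_zero,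
    abs_zero] at this
  exact (sub_eq_zero.1 (abs_nonpos_iff.1 (nonpos_of_mul_nonpos_right this hκ))).symm

theorem ExpandsOnCells.rootMultiplicity_le_one {κ : ℝ} (h : ExpandsOnCells r b D ε κ)
    (hκ : 0 < κ) (hrm : StrictMono r) {m : Fin N} {x₀ : ℝ} (hx₀ : x₀ ∈ cell r b D m)
    (hroot : (perturbedPoly r b D ε).IsRoot x₀) :
    (perturbedPoly r b D ε).rootMultiplicity x₀ ≤ 1 := by
  set Q : ℝ → ℝ := fun y => ∏ j, (y + r j)
  have hQ : 0 < |Q x₀| :=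
    abs_pos.2 (prod_ne_zero_iff.2 fun j _ => add_ne_zero_of_mem_cell hrm hx₀ j)
  have hQcont : Continuous fun y => |Q y| := by fun_prop
  refine rootMultiplicity_le_one_of_linear_growth (κ := |Q x₀| / 2 * κ) (by positivity) ?_
  have hnear : ∀ᶠ y in 𝓝 x₀, y ∈ cell r b D m ∧ |Q x₀| / 2 < |Q y| :=
    ((isOpen_cell m).eventually_mem hx₀).and
      ((hQcont.tendsto x₀).eventually (lt_mem_nhds (by linarith)))
  filter_upwards [nhdsWithin_le_nhds hnear, self_mem_nhdsWithin] with y ⟨hy, hQy⟩ (hyx : x₀ < y)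
  have hF := h m x₀ y hx₀ hy hyx.le
  rw [(isRoot_perturbedPoly_iff (add_ne_zero_of_mem_cell hrm hx₀)).1 hroot, sub_zero] at hF
  have hκy : 0 < κ * (y - x₀) := mul_pos hκ (sub_pos.2 hyx)
  rw [eval_perturbedPoly (add_ne_zero_of_mem_cell hrm hy), abs_mul,
    abs_of_nonneg (hκy.le.trans hF), mul_assoc]
  exact mul_le_mul hQy.le hF hκy.le (abs_nonneg _)

theorem roots_perturbedPoly (hr : ∀ i, 0 < r i) (hrm : StrictMono r) (hb : ∀ i, 0 < b i)
    (hD : 0 < D) (hε : 0 ≤ ε) {κ : ℝ} (hκ : 0 < κ) (h : ExpandsOnCells r b D ε κ)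
    {ρ : Fin N → ℝ} (hρ : ∀ m, ρ m ∈ cell r b D m)
    (hρroot : ∀ m, (perturbedPoly r b D ε).IsRoot (ρ m)) :
    (perturbedPoly r b D ε).roots = univ.val.map ρ := by
  classical
  have hne := perturbedPoly_ne_zero hr hb hD hε
  have hnodup : (perturbedPoly r b D ε).roots.Nodup := by
    refine Multiset.nodup_iff_count_le_one.2 fun x => ?_
    rw [count_roots]
    by_cases hx : (perturbedPoly r b D ε).IsRoot x
    · obtain ⟨m, hm⟩ := exists_mem_cell_of_isRoot hr hrm hb hD hε hx
      exact h.rootMultiplicity_le_one hκ hrm hm hx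
    · rw [rootMultiplicity_eq_zero hx]
      exact zero_le_one
  refine (Multiset.Nodup.ext hnodup
    (univ.nodup.map (strictAnti_of_mem_cell hρ).injective)).2 fun x => ?_
  rw [mem_roots hne, Multiset.mem_map]
  constructor
  · intro hx
    obtain ⟨m, hm⟩ := exists_mem_cell_of_isRoot hr hrm hb hD hε hx
    exact ⟨m, mem_univ m, h.eq_of_isRoot hκ hrm (hρ m) hm (hρroot m) hx⟩
  · rintro ⟨m, -, rfl⟩
    exact hρroot m

theorem tendsto_of_isRoot_mem_cell (hr : ∀ i, 0 < r i) (hrm : StrictMono r) (hb : ∀ i, 0 < b i)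
    (hD : 0 < D) {κ : ℝ} (hκ : 0 < κ) (h : ExpandsOnCells r b D 0 κ) {ε : ℕ → ℝ}
    (hε : Tendsto ε atTop (𝓝 0)) {m : Fin N} {A : ℕ → ℝ} (hA : ∀ k, A k ∈ cell r b D m)
    (hAroot : ∀ k, (perturbedPoly r b D (ε k)).IsRoot (A k)) {a : ℝ} (ha : a ∈ cell r b D m)
    (haroot : (perturbedPoly r b D 0).IsRoot a) : Tendsto A atTop (𝓝 a) := by
  set L := rootBound b D + ∑ i, r i
  have hbound : ∀ k, |A k - a| ≤ |ε k| * L ^ 2 / κ := fun k => by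
    have hFA := (isRoot_perturbedPoly_iff (add_ne_zero_of_mem_cell hrm (hA k))).1 (hAroot k)
    have hFa := (isRoot_perturbedPoly_iff (add_ne_zero_of_mem_cell hrm ha)).1 haroot
    have hshift : secularFn r b D 0 (A k) - secularFn r b D 0 a = -(ε k * A k ^ 2) := by
      unfold secularFn at hFA hFa ⊢
      linarith
    have hAL := abs_le.1 (abs_le_of_mem_cell hr hb hD (hA k))
    rw [le_div_iff₀ hκ, mul_comm]
    calc κ * |A k - a| ≤ |secularFn r b D 0 (A k) - secularFn r b D 0 a| :=
          h.mul_abs_sub_le ha (hA k)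
      _ = |ε k| * A k ^ 2 := by rw [hshift, abs_neg, abs_mul, abs_of_nonneg (sq_nonneg (A k))]
      _ ≤ |ε k| * L ^ 2 := mul_le_mul_of_nonneg_left (sq_le_sq' hAL.1 hAL.2) (abs_nonneg _)
  have hlim : Tendsto (fun k => |ε k| * L ^ 2 / κ) atTop (𝓝 0) := by
    simpa using ((hε.abs.mul_const (L ^ 2)).div_const κ)
  exact tendsto_iff_norm_sub_tendsto_zero.2
    (squeeze_zero (fun k => norm_nonneg _) hbound hlim)

end Secular

open Secular in
theorem stmt_9_general (N : ℕ) (r b : Fin N → ℝ)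
    (hr : ∀ i, 0 < r i) (hrm : StrictMono r) (hb : ∀ i, 0 < b i)
    (D : ℝ) (hD : 0 < D)
    (P : Polynomial ℝ)
    (hP : P = C D * ∏ j, (X + C (r j)) -
      ∑ i, C (b i) * ∏ j ∈ Finset.univ.erase i, (X + C (r j)))
    (Pk : ℕ → Polynomial ℝ)
    (hPk : ∀ k : ℕ, Pk k =
      (C D + C (((2 * (k : ℝ) - 1) ^ 2)⁻¹) * X ^ 2) * ∏ j, (X + C (r j)) -
      ∑ i, C (b i) * ∏ j ∈ Finset.univ.erase i, (X + C (r j)))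
    (a : Fin N → ℝ) (haanti : StrictAnti a)
    (haroots : P.roots = Multiset.map a Finset.univ.val) :
    ∃ k₀ : ℕ, 1 ≤ k₀ ∧ ∃ A : ℕ → Fin N → ℝ,
      (∀ k : ℕ, k₀ ≤ k →
        (∀ j, -(r j) < A k j) ∧
        (∀ j : Fin N, ∀ h : (j : ℕ) + 1 < N, A k ⟨(j : ℕ) + 1, h⟩ < -(r j)) ∧
        (∃ p q : ℝ, q ≠ 0 ∧
          ((Pk k).map (algebraMap ℝ ℂ)).roots =
            Multiset.map (fun j => ((A k j : ℝ) : ℂ)) Finset.univ.val +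
              {(p : ℂ) + (q : ℂ) * I, (p : ℂ) - (q : ℂ) * I} ∧
          ((Pk k).map (algebraMap ℝ ℂ)).roots.Nodup)) ∧
      (∀ j, Tendsto (fun k => A k j) atTop (nhds (a j))) := by
  set ε : ℕ → ℝ := fun k => ((2 * (k : ℝ) - 1) ^ 2)⁻¹
  have hε0 : ∀ k, 0 ≤ ε k := fun k => inv_nonneg.2 (sq_nonneg _)
  have hεlim : Tendsto ε atTop (𝓝 0) :=
    tendsto_inv_atTop_zero.comp ((tendsto_pow_atTop two_ne_zero).comp
      (tendsto_atTop_add_const_right _ _ (tendsto_natCast_atTop_atTop.const_mul_atTop two_pos)))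
  have hP' : P = perturbedPoly r b D 0 := by rw [hP, perturbedPoly, C_0, zero_mul, add_zero]
  obtain ⟨κ, hκ, ε₀, hε₀, hexp⟩ := exists_expandsOnCells hr hrm hb hD
  have hexp0 := hexp 0 le_rfl hε₀.le
  choose A hAcell hAroot using fun k => exists_isRoot_mem_cell hr hrm hb hD (hε0 k)
  choose ρ hρcell hρroot using exists_isRoot_mem_cell hr hrm hb hD (ε := 0) le_rfl
  obtain rfl : a = ρ := haanti.eq_of_map_univ_val_eq (strictAnti_of_mem_cell hρcell) (by
    rw [← haroots, hP', roots_perturbedPoly hr hrm hb hD le_rfl hκ hexp0 hρcell hρroot])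
  obtain ⟨k₁, hk₁⟩ := eventually_atTop.1 (hεlim.eventually (ge_mem_nhds hε₀))
  refine ⟨max k₁ 1, le_max_right _ _, A, fun k hk => ⟨fun j => (hAcell k j).1,
    fun j hj => (hAcell k _).2.2 j (Fin.lt_def.2 (Nat.lt_succ_self _)), ?_⟩,
    fun j => tendsto_of_isRoot_mem_cell hr hrm hb hD hκ hexp0 hεlim (fun k => hAcell k j)
      (fun k => hAroot k j) (hρcell j) (hρroot j)⟩
  have hεk : ε k ≠ 0 := by
    have : (1 : ℝ) ≤ k := by exact_mod_cast le_of_max_le_right hk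
    exact inv_ne_zero (pow_ne_zero _ (by linarith))
  rw [hPk k]
  exact roots_map_complex_eq_add_conj_pair (natDegree_perturbedPoly hεk)
    (strictAnti_of_mem_cell (hAcell k)).injective
    (roots_perturbedPoly hr hrm hb hD (hε0 k) hκ (hexp _ (hε0 k) (hk₁ k (le_of_max_le_left hk)))
      (hAcell k) (hAroot k))

/-- There exists `k₀ ≥ 1` such that for every `k ≥ k₀`, `P_N^k` has exactly
`N` real roots, all simple, which can be labeled so that they interlace the `-r j`, and its
remaining two roots form a simple conjugate pair of nonreal complex numbers. Moreover each
`a_j^k → a_j` as `k → ∞`, where `a_1 > ⋯ > a_N` are the `N` real roots of `P_N`. -/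
theorem stmt_9 (N : ℕ) (hN : 0 < N) (r b : Fin N → ℝ)
    (hr : ∀ i, 0 < r i) (hrm : StrictMono r) (hb : ∀ i, 0 < b i)
    (D : ℝ) (hD : 0 < D)
    (P : Polynomial ℝ)
    (hP : P = C D * ∏ j, (X + C (r j)) -
      ∑ i, C (b i) * ∏ j ∈ Finset.univ.erase i, (X + C (r j)))
    (Pk : ℕ → Polynomial ℝ)
    (hPk : ∀ k : ℕ, Pk k =
      (C D + C (((2 * (k : ℝ) - 1) ^ 2)⁻¹) * X ^ 2) * ∏ j, (X + C (r j)) -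
      ∑ i, C (b i) * ∏ j ∈ Finset.univ.erase i, (X + C (r j)))
    (a : Fin N → ℝ) (haanti : StrictAnti a)
    (haroots : P.roots = Multiset.map a Finset.univ.val) :
    ∃ k₀ : ℕ, 1 ≤ k₀ ∧ ∃ A : ℕ → Fin N → ℝ,
      (∀ k : ℕ, k₀ ≤ k →
        (∀ j, -(r j) < A k j) ∧
        (∀ j : Fin N, ∀ h : (j : ℕ) + 1 < N, A k ⟨(j : ℕ) + 1, h⟩ < -(r j)) ∧
        (∃ p q : ℝ, q ≠ 0 ∧
          ((Pk k).map (algebraMap ℝ ℂ)).roots =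
            Multiset.map (fun j => ((A k j : ℝ) : ℂ)) Finset.univ.val +
              {(p : ℂ) + (q : ℂ) * I, (p : ℂ) - (q : ℂ) * I} ∧
          ((Pk k).map (algebraMap ℝ ℂ)).roots.Nodup)) ∧
      (∀ j, Tendsto (fun k => A k j) atTop (nhds (a j))) :=
  stmt_9_general N r b hr hrm hb D hD P hP Pk hPk a haanti haroots
end

section
/- There exist an integer k_0 ≥ 1 and a constant M_1 > 0, independent of k, such that for every integer k ≥ k_0 the polynomial P_N^k has exactly N real roots a_1^k > a_2^k > ⋯ > a_N^k, and for each 1 ≤ j ≤ N these satisfy −r_j < a_j^k and 0 ≤ a_j − a_j^k ≤ M_1/k², where a_1 > a_2 > ⋯ > a_N are the N real roots of P_N. -/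
/-!
Write `g_ε x = D + ε x² - ∑ i, b i / (x + r i)`, so that away from the poles `P_N^k` is
`g_ε · ∏ j, (X + r j)` with `ε = (2k - 1)⁻²`. On each gap `(-r j, -r (j - 1))` between consecutive
poles `g_ε` runs from `-∞` to positive values, and left of all poles it is positive; hence it has
a root in every gap. As long as `4 ε (r j)³ ≤ b j`, the pole term `-b j / (x + r j)` dominates the
quadratic term on the `j`-th gap, so `g_ε` is strictly increasing there and these are all the
roots. Finally `g_0 (a j) = 0` and `g_0 (a_j^k) = -ε (a_j^k)²`, and the increments of `g_0` on the
`j`-th gap are at least those of its `j`-th pole term; this gives `0 ≤ a j - a_j^k = O(ε)`.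
-/

open Polynomial Finset Filter Topology

noncomputable section Secular

variable {ι : Type*} [Fintype ι] (r b : ι → ℝ) (D ε : ℝ)

def poleSum (x : ℝ) : ℝ := ∑ i, b i / (x + r i)

def secularFn (x : ℝ) : ℝ := D + ε * x ^ 2 - poleSum r b x

def secularPoly [DecidableEq ι] : ℝ[X] :=
  (C D + C ε * X ^ 2) * ∏ j, (X + C (r j)) - ∑ i, C (b i) * ∏ j ∈ univ.erase i, (X + C (r j))

variable {r b D ε}

theorem eval_secularPoly [DecidableEq ι] {x : ℝ} (hx : ∀ l, x + r l ≠ 0) :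
    (secularPoly r b D ε).eval x = secularFn r b D ε x * ∏ l, (x + r l) := by
  simp only [secularPoly, secularFn, poleSum, eval_sub, eval_mul, eval_finsetSum, eval_prod,
    eval_add, eval_pow, eval_C, eval_X, sub_mul, sum_mul]
  congr 1
  refine sum_congr rfl fun i _ => ?_
  rw [← mul_prod_erase univ (fun l => x + r l) (mem_univ i), ← mul_assoc, div_mul_cancel₀ _ (hx i)]

theorem eval_secularPoly_neg_ne_zero [DecidableEq ι] (hr : Function.Injective r) {j : ι}
    (hb : b j ≠ 0) :
    (secularPoly r b D ε).eval (-r j) ≠ 0 := by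
  have hvanish : ∀ s : Finset ι, j ∈ s → ∏ l ∈ s, (-r j + r l) = 0 :=
    fun s hs => prod_eq_zero hs (neg_add_cancel _)
  simp only [secularPoly, eval_sub, eval_mul, eval_finsetSum, eval_prod, eval_add, eval_pow,
    eval_C, eval_X, hvanish univ (mem_univ j), mul_zero, zero_sub, neg_ne_zero]
  rw [sum_eq_single_of_mem j (mem_univ j)
    fun i _ hij => by rw [hvanish _ (mem_erase.2 ⟨hij.symm, mem_univ j⟩), mul_zero]]
  refine mul_ne_zero hb (prod_ne_zero_iff.2 fun l hl => ?_)
  rw [neg_add_eq_sub, sub_ne_zero]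
  exact hr.ne (mem_erase.1 hl).1

theorem eval_secularPoly_eq_zero_iff [DecidableEq ι] (hr : Function.Injective r)
    (hb : ∀ i, b i ≠ 0) {x : ℝ} :
    (secularPoly r b D ε).eval x = 0 ↔ (∀ l, x + r l ≠ 0) ∧ secularFn r b D ε x = 0 := by
  by_cases hx : ∀ l, x + r l ≠ 0
  · rw [eval_secularPoly hx, mul_eq_zero, prod_eq_zero_iff]
    simp [hx]
  · push Not at hx
    obtain ⟨l, hl⟩ := hx
    rw [eq_neg_of_add_eq_zero_left hl]
    exact iff_of_false (eval_secularPoly_neg_ne_zero hr (hb l)) fun h => h.1 l (neg_add_cancel _)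

theorem continuousOn_secularFn :
    ContinuousOn (secularFn r b D ε) {x | ∀ l, x + r l ≠ 0} :=
  (continuousOn_const.add (continuousOn_const.mul (continuousOn_id.pow 2))).sub
    (continuousOn_finsetSum _ fun i _ => continuousOn_const.div
      (continuousOn_id.add continuousOn_const) fun _ hx => hx i)

theorem tendsto_div_add_nhdsGT {p c : ℝ} (hc : 0 < c) :
    Tendsto (fun x => c / (x + p)) (𝓝[>] (-p)) atTop := by
  have h : Tendsto (fun x => x + p) (𝓝[>] (-p)) (𝓝[>] 0) :=
    tendsto_nhdsWithin_iff.2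
      ⟨((continuous_add_const p).tendsto' (-p) 0 (neg_add_cancel p)).mono_left nhdsWithin_le_nhds,
        eventually_nhdsWithin_of_forall fun x hx => by simpa [neg_lt_iff_pos_add] using hx⟩
  simpa [div_eq_mul_inv] using (tendsto_inv_nhdsGT_zero.comp h).const_mul_atTop hc

theorem tendsto_div_add_nhdsLT {p c : ℝ} (hc : 0 < c) :
    Tendsto (fun x => c / (x + p)) (𝓝[<] (-p)) atBot := by
  have h : Tendsto (fun x => x + p) (𝓝[<] (-p)) (𝓝[<] 0) :=
    tendsto_nhdsWithin_iff.2
      ⟨((continuous_add_const p).tendsto' (-p) 0 (neg_add_cancel p)).mono_left nhdsWithin_le_nhds,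
        eventually_nhdsWithin_of_forall fun x hx => by simpa [lt_neg_iff_add_neg] using hx⟩
  simpa [div_eq_mul_inv] using (tendsto_inv_nhdsLT_zero.comp h).const_mul_atBot hc

theorem secularFn_eq_sub_div [DecidableEq ι] (j : ι) :
    secularFn r b D ε = fun x => (D + ε * x ^ 2 - ∑ i ∈ univ.erase j, b i / (x + r i))
      - b j / (x + r j) := by
  ext x
  rw [secularFn, poleSum, ← add_sum_erase _ _ (mem_univ j)]
  ring

theorem continuousAt_secularFn_erase [DecidableEq ι] (hr : Function.Injective r) (j : ι) :
    ContinuousAt (fun x => D + ε * x ^ 2 - ∑ i ∈ univ.erase j, b i / (x + r i)) (-r j) := by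
  refine (continuous_const.add (continuous_const.mul (continuous_id.pow 2))).continuousAt.sub
    (tendsto_finsetSum _ fun i hi => continuousAt_const.div
      (continuousAt_id.add continuousAt_const) ?_)
  rw [neg_add_eq_sub, sub_ne_zero]
  exact hr.ne (mem_erase.1 hi).1

theorem tendsto_secularFn_nhdsGT (hr : Function.Injective r) {j : ι} (hb : 0 < b j) :
    Tendsto (secularFn r b D ε) (𝓝[>] (-r j)) atBot := by
  classical
  rw [secularFn_eq_sub_div j]
  exact ((continuousAt_secularFn_erase hr j).tendsto.mono_left nhdsWithin_le_nhds).add_atBot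
    (tendsto_neg_atTop_atBot.comp (tendsto_div_add_nhdsGT hb))

theorem tendsto_secularFn_nhdsLT (hr : Function.Injective r) {j : ι} (hb : 0 < b j) :
    Tendsto (secularFn r b D ε) (𝓝[<] (-r j)) atTop := by
  classical
  rw [secularFn_eq_sub_div j]
  exact ((continuousAt_secularFn_erase hr j).tendsto.mono_left nhdsWithin_le_nhds).add_atTop
    (tendsto_neg_atBot_atTop.comp (tendsto_div_add_nhdsLT hb))

theorem tendsto_poleSum_atTop : Tendsto (poleSum r b) atTop (𝓝 0) := by
  unfold poleSum
  simpa using tendsto_finsetSum univ fun i _ =>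
    tendsto_const_nhds.div_atTop (tendsto_atTop_add_const_right _ (r i) tendsto_id)

end Secular

section PoleGap

variable {N : ℕ} {r b : Fin N → ℝ} {D ε : ℝ}

/-- The `j`-th interval `(-r j, -r (j - 1))` between consecutive poles (`(-r 0, ∞)` for `j = 0`),
written so that no predecessor of `j` appears. -/
def poleGap (r : Fin N → ℝ) (j : Fin N) : Set ℝ := {x | -r j < x ∧ ∀ l < j, x < -r l}

theorem add_pos_of_mem_poleGap (hr : Monotone r) {j i : Fin N} {x : ℝ} (hx : x ∈ poleGap r j)
    (hji : j ≤ i) : 0 < x + r i := by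
  linarith [hx.1, hr hji]

theorem add_neg_of_mem_poleGap {j i : Fin N} {x : ℝ} (hx : x ∈ poleGap r j) (hij : i < j) :
    x + r i < 0 := by
  linarith [hx.2 i hij]

theorem add_ne_zero_of_mem_poleGap (hr : Monotone r) {j : Fin N} {x : ℝ} (hx : x ∈ poleGap r j)
    (i : Fin N) : x + r i ≠ 0 := by
  rcases lt_or_ge i j with hij | hji
  · exact (add_neg_of_mem_poleGap hx hij).ne
  · exact (add_pos_of_mem_poleGap hr hx hji).ne'

theorem mul_pos_of_mem_poleGap (hr : Monotone r) {j : Fin N} {x y : ℝ} (hx : x ∈ poleGap r j)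
    (hy : y ∈ poleGap r j) (i : Fin N) : 0 < (x + r i) * (y + r i) := by
  rcases lt_or_ge i j with hij | hji
  · exact mul_pos_of_neg_of_neg (add_neg_of_mem_poleGap hx hij) (add_neg_of_mem_poleGap hy hij)
  · exact mul_pos (add_pos_of_mem_poleGap hr hx hji) (add_pos_of_mem_poleGap hr hy hji)

theorem ordConnected_poleGap (j : Fin N) : (poleGap r j).OrdConnected :=
  ⟨fun _ hx _ hy _ hz => ⟨hx.1.trans_le hz.1, fun l hl => hz.2.trans_lt (hy.2 l hl)⟩⟩

theorem strictAnti_of_mem_poleGap {A : Fin N → ℝ} (hA : ∀ j, A j ∈ poleGap r j) : StrictAnti A :=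
  fun _ j hij => ((hA j).2 _ hij).trans (hA _).1

theorem exists_mem_poleGap_or_forall_lt {x : ℝ} (hx : ∀ l, x + r l ≠ 0) :
    (∃ j, x ∈ poleGap r j) ∨ ∀ l, x < -r l := by
  by_cases h : ∃ l, -r l < x
  · obtain ⟨l, hl⟩ := h
    obtain ⟨j, hj, hmin⟩ := (univ.filter fun l => -r l < x).exists_min_image id ⟨l, by simpa⟩
    refine Or.inl ⟨j, (mem_filter.1 hj).2, fun i hij => ?_⟩
    have hi : ¬ -r i < x := fun hi => (hmin i (mem_filter.2 ⟨mem_univ i, hi⟩)).not_gt hij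
    exact (not_lt.1 hi).lt_of_ne fun h => hx i (by rw [h, neg_add_cancel])
  · push Not at h
    exact Or.inr fun l => (h l).lt_of_ne fun h' => hx l (by rw [h', neg_add_cancel])

theorem poleGap_mem_nhdsGT (hr : StrictMono r) (j : Fin N) : poleGap r j ∈ 𝓝[>] (-r j) := by
  refine Eventually.and (self_mem_nhdsWithin (s := Set.Ioi (-r j)))
    (eventually_nhdsWithin_of_eventually_nhds (eventually_all.2 fun l => ?_))
  by_cases hl : l < j
  · exact Filter.mem_of_superset (Iio_mem_nhds (neg_lt_neg (hr hl))) fun _ hx _ => hx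
  · exact .of_forall fun _ h => absurd h hl

theorem poleGap_mem_nhdsLT (hr : StrictMono r) {j p : Fin N} (hpj : p < j)
    (hp : ∀ l < j, l ≤ p) : poleGap r j ∈ 𝓝[<] (-r p) :=
  (eventually_nhdsWithin_of_eventually_nhds (Ioi_mem_nhds (neg_lt_neg (hr hpj)))).and
    (eventually_nhdsWithin_of_forall fun _ hx l hl => (Set.mem_Iio.1 hx).trans_le
      (neg_le_neg (hr.monotone (hp l hl))))

theorem poleGap_mem_atTop {j : Fin N} (hj : ∀ l, j ≤ l) : poleGap r j ∈ atTop :=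
  (eventually_gt_atTop (-r j)).mono fun _ hx => ⟨hx, fun l hl => absurd hl (hj l).not_gt⟩

theorem exists_mem_poleGap_secularFn_pos (hr : StrictMono r) (hb : ∀ i, 0 < b i) (hD : 0 < D)
    (hε : 0 ≤ ε) (j : Fin N) : ∃ y ∈ poleGap r j, 0 < secularFn r b D ε y := by
  by_cases h : ∃ l, l < j
  · obtain ⟨l, hl⟩ := h
    let p : Fin N := ⟨j - 1, by omega⟩
    have hpj : p < j := Fin.lt_def.2 (by simp only [p]; omega)
    have hp : ∀ l < j, l ≤ p := fun l hl => Fin.le_def.2 (by simp only [p]; omega)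
    exact nonempty_of_mem (inter_mem (poleGap_mem_nhdsLT hr hpj hp)
      ((tendsto_secularFn_nhdsLT hr.injective (hb p)).eventually (eventually_gt_atTop 0)))
  · push Not at h
    obtain ⟨y, hy, hpos⟩ := nonempty_of_mem (inter_mem (poleGap_mem_atTop h)
      ((tendsto_poleSum_atTop (r := r) (b := b)).eventually (gt_mem_nhds hD)))
    have : poleSum r b y < D := hpos
    exact ⟨y, hy, by unfold secularFn; nlinarith [mul_nonneg hε (sq_nonneg y)]⟩

theorem exists_mem_poleGap_secularFn_eq_zero (hr : StrictMono r) (hb : ∀ i, 0 < b i) (hD : 0 < D)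
    (hε : 0 ≤ ε) (j : Fin N) : ∃ x ∈ poleGap r j, secularFn r b D ε x = 0 := by
  obtain ⟨y, hy, hpos⟩ := exists_mem_poleGap_secularFn_pos hr hb hD hε j
  exact (ordConnected_poleGap j).isPreconnected.intermediate_value_Iic hy
    (le_principal_iff.2 (poleGap_mem_nhdsGT hr j)) (continuousOn_secularFn.mono fun _ hx =>
      add_ne_zero_of_mem_poleGap hr.monotone hx)
    (tendsto_secularFn_nhdsGT hr.injective (hb j)) hpos.le

theorem le_poleSum_sub_poleSum (hr : Monotone r) (hb : ∀ i, 0 < b i) {j : Fin N} {x y : ℝ}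
    (hx : x ∈ poleGap r j) (hy : y ∈ poleGap r j) (hxy : x ≤ y) :
    b j * (y - x) / ((x + r j) * (y + r j)) ≤ poleSum r b x - poleSum r b y := by
  have hterm : ∀ i, b i / (x + r i) - b i / (y + r i) = b i * (y - x) / ((x + r i) * (y + r i)) :=
    fun i => by
      rw [div_sub_div _ _ (add_ne_zero_of_mem_poleGap hr hx i) (add_ne_zero_of_mem_poleGap hr hy i)]
      ring
  rw [poleSum, poleSum, ← sum_sub_distrib, sum_congr rfl fun i _ => hterm i]
  exact single_le_sum (fun i _ => div_nonneg (mul_nonneg (hb i).le (sub_nonneg.2 hxy))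
    (mul_pos_of_mem_poleGap hr hx hy i).le) (mem_univ j)

theorem strictMonoOn_secularFn (hr : Monotone r) (hb : ∀ i, 0 < b i) (hε : 0 ≤ ε) {j : Fin N}
    (hsmall : 4 * ε * r j ^ 3 ≤ b j) : StrictMonoOn (secularFn r b D ε) (poleGap r j) := by
  intro x hx y hy hxy
  have hpole := le_poleSum_sub_poleSum hr hb hx hy hxy.le
  set B := b j * (y - x) / ((x + r j) * (y + r j))
  have hu : 0 < x + r j := add_pos_of_mem_poleGap hr hx le_rfl
  have hv : 0 < y + r j := add_pos_of_mem_poleGap hr hy le_rfl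
  have hB : B * ((x + r j) * (y + r j)) = b j * (y - x) := div_mul_cancel₀ _ (by positivity)
  have hB0 : 0 < B := div_pos (mul_pos (hb j) (sub_pos.2 hxy)) (by positivity)
  suffices 0 < ε * (y - x) * (y + x) + B by unfold secularFn; nlinarith
  rcases le_or_gt 0 (y + x) with hxy0 | hxy0
  · have : 0 ≤ ε * (y - x) * (y + x) := by have := sub_pos.2 hxy; positivity
    linarith
  · -- now `x < 0`, so `(x + r j) (y + r j) < 2 r_j²` and `B > 2 ε r_j (y - x) ≥ -ε (y - x) (y + x)`
    have hrj : 0 < r j := by linarith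
    have huv : (x + r j) * (y + r j) < 2 * r j ^ 2 := by nlinarith
    have hB2 : 2 * ε * r j * (y - x) < B := by
      have : 4 * ε * r j ^ 3 * (y - x) < B * (2 * r j ^ 2) := by
        nlinarith [mul_le_mul_of_nonneg_right hsmall (sub_pos.2 hxy).le]
      nlinarith
    nlinarith [mul_nonneg hε (sub_pos.2 hxy).le]

theorem secularFn_pos_of_forall_lt (hb : ∀ i, 0 < b i) (hD : 0 < D) (hε : 0 ≤ ε) {x : ℝ}
    (hx : ∀ l, x < -r l) : 0 < secularFn r b D ε x := by
  have : poleSum r b x ≤ 0 :=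
    sum_nonpos fun i _ => (div_neg_of_pos_of_neg (hb i) (by linarith [hx i])).le
  unfold secularFn
  nlinarith [mul_nonneg hε (sq_nonneg x)]

theorem exists_roots_secularPoly (hr : StrictMono r) (hb : ∀ i, 0 < b i) (hD : 0 < D)
    (hε : 0 ≤ ε) (hsmall : ∀ j, 4 * ε * r j ^ 3 ≤ b j) :
    ∃ A : Fin N → ℝ, (∀ j, A j ∈ poleGap r j ∧ secularFn r b D ε (A j) = 0) ∧
      ∀ x, (secularPoly r b D ε).eval x = 0 ↔ ∃ j, x = A j := by
  choose A hA using exists_mem_poleGap_secularFn_eq_zero hr hb hD hε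
  refine ⟨A, hA, fun x => ?_⟩
  rw [eval_secularPoly_eq_zero_iff hr.injective fun i => (hb i).ne']
  constructor
  · rintro ⟨hpole, hx⟩
    rcases exists_mem_poleGap_or_forall_lt hpole with ⟨j, hj⟩ | hlt
    · exact ⟨j, (strictMonoOn_secularFn hr.monotone hb hε (hsmall j)).injOn hj (hA j).1
        (hx.trans (hA j).2.symm)⟩
    · exact absurd hx (secularFn_pos_of_forall_lt hb hD hε hlt).ne'
  · rintro ⟨j, rfl⟩
    exact ⟨add_ne_zero_of_mem_poleGap hr.monotone (hA j).1, (hA j).2⟩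

theorem sub_le_of_secularFn_eq_zero (hr : Monotone r) (hb : ∀ i, 0 < b i) (hε : 0 ≤ ε)
    {j : Fin N} {a A : ℝ} (ha : a ∈ poleGap r j) (hA : A ∈ poleGap r j)
    (ha0 : secularFn r b D 0 a = 0) (hA0 : secularFn r b D ε A = 0) :
    A ≤ a ∧ a - A ≤ ε * ((r j ^ 2 + a ^ 2) * (a + r j) ^ 2 / b j) := by
  have hdiff : poleSum r b A - poleSum r b a = ε * A ^ 2 := by
    unfold secularFn at ha0 hA0; linarith
  have hAa : A ≤ a := by
    refine ((strictMonoOn_secularFn (D := D) hr hb le_rfl (by simpa using (hb j).le)).le_iff_le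
      hA ha).1 ?_
    unfold secularFn
    nlinarith [mul_nonneg hε (sq_nonneg A)]
  refine ⟨hAa, ?_⟩
  have hpole := le_poleSum_sub_poleSum hr hb hA ha hAa
  rw [hdiff, div_le_iff₀ (mul_pos_of_mem_poleGap hr hA ha j)] at hpole
  have hu : 0 < A + r j := add_pos_of_mem_poleGap hr hA le_rfl
  have hA2 : A ^ 2 ≤ r j ^ 2 + a ^ 2 := by
    rcases le_or_gt 0 A with h0 | h0 <;> nlinarith [hA.1]
  have hprod : A ^ 2 * ((A + r j) * (a + r j)) ≤ (r j ^ 2 + a ^ 2) * (a + r j) ^ 2 :=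
    mul_le_mul hA2 (by nlinarith) (mul_pos_of_mem_poleGap hr hA ha j).le (by positivity)
  rw [← mul_div_assoc, le_div_iff₀ (hb j)]
  nlinarith [mul_le_mul_of_nonneg_left hprod hε]

theorem inv_two_mul_sub_one_sq_le_inv_sq {k : ℝ} (hk : 1 ≤ k) : ((2 * k - 1) ^ 2)⁻¹ ≤ (k ^ 2)⁻¹ :=
  inv_anti₀ (pow_pos (by linarith) 2) (by nlinarith)

theorem four_mul_inv_two_mul_sub_one_sq_mul_le (hr : ∀ i, 0 < r i) (hb : ∀ i, 0 < b i) {k : ℕ}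
    (hk1 : 1 ≤ k) (hk : ∑ j, 4 * r j ^ 3 / b j ≤ (k : ℝ)) (j : Fin N) :
    4 * ((2 * (k : ℝ) - 1) ^ 2)⁻¹ * r j ^ 3 ≤ b j := by
  have hk1' : (1 : ℝ) ≤ k := by exact_mod_cast hk1
  have hεk : ((2 * (k : ℝ) - 1) ^ 2)⁻¹ ≤ (k : ℝ)⁻¹ :=
    (inv_two_mul_sub_one_sq_le_inv_sq hk1').trans (inv_anti₀ (by linarith) (by nlinarith))
  have hj : 4 * r j ^ 3 / b j ≤ k :=
    (single_le_sum (f := fun i => 4 * r i ^ 3 / b i)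
      (fun i _ => div_nonneg (by have := hr i; positivity) (hb i).le) (mem_univ j)).trans hk
  rw [div_le_iff₀ (hb j)] at hj
  calc 4 * ((2 * (k : ℝ) - 1) ^ 2)⁻¹ * r j ^ 3 ≤ 4 * (k : ℝ)⁻¹ * r j ^ 3 := by
        have := hr j; gcongr
    _ ≤ b j := by
        rw [mul_comm 4, mul_assoc, inv_mul_le_iff₀ (by linarith)]
        linarith

theorem exists_roots_secularPoly_sub_le (hr : ∀ i, 0 < r i) (hrm : StrictMono r)
    (hb : ∀ i, 0 < b i) (hD : 0 < D) {a : Fin N → ℝ}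
    (ha : ∀ j, a j ∈ poleGap r j ∧ secularFn r b D 0 (a j) = 0) {k : ℕ} (hk1 : 1 ≤ k)
    (hk : ∑ j, 4 * r j ^ 3 / b j ≤ (k : ℝ)) :
    ∃ A : Fin N → ℝ, StrictAnti A ∧
      (∀ x, (secularPoly r b D ((2 * (k : ℝ) - 1) ^ 2)⁻¹).eval x = 0 ↔ ∃ j, x = A j) ∧
      ∀ j, -r j < A j ∧ 0 ≤ a j - A j ∧
        a j - A j ≤ (∑ i, (r i ^ 2 + a i ^ 2) * (a i + r i) ^ 2 / b i + 1) / (k : ℝ) ^ 2 := by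
  have hk1' : (1 : ℝ) ≤ k := by exact_mod_cast hk1
  obtain ⟨A, hA, hAroots⟩ := exists_roots_secularPoly hrm hb hD (by positivity)
    (four_mul_inv_two_mul_sub_one_sq_mul_le hr hb hk1 hk)
  refine ⟨A, strictAnti_of_mem_poleGap fun j => (hA j).1, hAroots, fun j => ?_⟩
  obtain ⟨hle, hsub⟩ := sub_le_of_secularFn_eq_zero hrm.monotone hb (by positivity) (ha j).1
    (hA j).1 (ha j).2 (hA j).2
  have hterm : (r j ^ 2 + a j ^ 2) * (a j + r j) ^ 2 / b j ≤
      ∑ i, (r i ^ 2 + a i ^ 2) * (a i + r i) ^ 2 / b i + 1 :=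
    (single_le_sum (f := fun i => (r i ^ 2 + a i ^ 2) * (a i + r i) ^ 2 / b i)
      (fun i _ => div_nonneg (by positivity) (hb i).le) (mem_univ j)).trans
      (le_add_of_nonneg_right zero_le_one)
  refine ⟨(hA j).1.1, sub_nonneg.2 hle, hsub.trans ?_⟩
  exact (mul_le_mul (inv_two_mul_sub_one_sq_le_inv_sq hk1') hterm
    (div_nonneg (by positivity) (hb j).le) (by positivity)).trans_eq (inv_mul_eq_div _ _)

end PoleGap

theorem stmt_10_general (N : ℕ) (r b : Fin N → ℝ)
    (hr : ∀ i, 0 < r i) (hrm : StrictMono r) (hb : ∀ i, 0 < b i)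
    (D : ℝ) (hD : 0 < D)
    (P : Polynomial ℝ)
    (hP : P = C D * ∏ j, (X + C (r j)) -
      ∑ i, C (b i) * ∏ j ∈ Finset.univ.erase i, (X + C (r j)))
    (Pk : ℕ → Polynomial ℝ)
    (hPk : ∀ k : ℕ, Pk k =
      (C D + C (((2 * (k : ℝ) - 1) ^ 2)⁻¹) * X ^ 2) * ∏ j, (X + C (r j)) -
      ∑ i, C (b i) * ∏ j ∈ Finset.univ.erase i, (X + C (r j)))
    (a : Fin N → ℝ) (haanti : StrictAnti a)
    (haroots : ∀ x : ℝ, P.eval x = 0 ↔ ∃ j, x = a j) :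
    ∃ k₀ : ℕ, 1 ≤ k₀ ∧ ∃ M₁ : ℝ, 0 < M₁ ∧ ∃ A : ℕ → Fin N → ℝ,
      ∀ k : ℕ, k₀ ≤ k →
        StrictAnti (A k) ∧
        (∀ x : ℝ, (Pk k).eval x = 0 ↔ ∃ j, x = A k j) ∧
        (∀ j : Fin N,
          -(r j) < A k j ∧
          0 ≤ a j - A k j ∧
          a j - A k j ≤ M₁ / (k : ℝ) ^ 2) := by
  obtain ⟨c, hc, hcroots⟩ := exists_roots_secularPoly (D := D) hrm hb hD le_rfl
    fun j => by simpa using (hb j).le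
  have hP0 : P = secularPoly r b D 0 := by rw [hP, secularPoly]; simp
  have hac : a = c := by
    refine (haanti.range_inj (strictAnti_of_mem_poleGap fun j => (hc j).1)).1 (Set.ext fun x => ?_)
    simpa [eq_comm] using (haroots x).symm.trans (hP0 ▸ hcroots x)
  subst hac
  set K := ∑ j, 4 * r j ^ 3 / b j
  set M := ∑ j, (r j ^ 2 + a j ^ 2) * (a j + r j) ^ 2 / b j
  have hM : 0 ≤ M := sum_nonneg fun j _ => div_nonneg (by positivity) (hb j).le
  refine ⟨⌈K⌉₊ + 1, le_add_self, M + 1, by linarith, ?_⟩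
  have hroots (k : ℕ) : ∃ A : Fin N → ℝ, ⌈K⌉₊ + 1 ≤ k → StrictAnti A ∧
      (∀ x, (Pk k).eval x = 0 ↔ ∃ j, x = A j) ∧ ∀ j, -r j < A j ∧ 0 ≤ a j - A j ∧
        a j - A j ≤ (M + 1) / (k : ℝ) ^ 2 := by
    by_cases hk : ⌈K⌉₊ + 1 ≤ k
    · obtain ⟨A, hA⟩ := exists_roots_secularPoly_sub_le hr hrm hb hD hc (le_of_add_le_right hk)
        ((Nat.le_ceil K).trans (by exact_mod_cast (Nat.le_succ _).trans hk))
      exact ⟨A, fun _ => hPk k ▸ hA⟩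
    · exact ⟨0, fun h => absurd h hk⟩
  choose A hA using hroots
  exact ⟨A, hA⟩

/-- There exist `k₀ ≥ 1` and `M₁ > 0`, independent of `k`, such that for
every `k ≥ k₀` the polynomial `P_N^k` has exactly `N` real roots
`a_1^k > a_2^k > ⋯ > a_N^k`, and for each `j` these satisfy `-r_j < a_j^k` and
`0 ≤ a_j - a_j^k ≤ M₁ / k²`, where `a_1 > ⋯ > a_N` are the `N` real roots of `P_N`. -/
theorem stmt_10 (N : ℕ) (hN : 0 < N) (r b : Fin N → ℝ)
    (hr : ∀ i, 0 < r i) (hrm : StrictMono r) (hb : ∀ i, 0 < b i)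
    (D : ℝ) (hD : 0 < D)
    (P : Polynomial ℝ)
    (hP : P = C D * ∏ j, (X + C (r j)) -
      ∑ i, C (b i) * ∏ j ∈ Finset.univ.erase i, (X + C (r j)))
    (Pk : ℕ → Polynomial ℝ)
    (hPk : ∀ k : ℕ, Pk k =
      (C D + C (((2 * (k : ℝ) - 1) ^ 2)⁻¹) * X ^ 2) * ∏ j, (X + C (r j)) -
      ∑ i, C (b i) * ∏ j ∈ Finset.univ.erase i, (X + C (r j)))
    (a : Fin N → ℝ) (haanti : StrictAnti a)
    (haroots : ∀ x : ℝ, P.eval x = 0 ↔ ∃ j, x = a j) :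
    ∃ k₀ : ℕ, 1 ≤ k₀ ∧ ∃ M₁ : ℝ, 0 < M₁ ∧ ∃ A : ℕ → Fin N → ℝ,
      ∀ k : ℕ, k₀ ≤ k →
        StrictAnti (A k) ∧
        (∀ x : ℝ, (Pk k).eval x = 0 ↔ ∃ j, x = A k j) ∧
        (∀ j : Fin N,
          -(r j) < A k j ∧
          0 ≤ a j - A k j ∧
          a j - A k j ≤ M₁ / (k : ℝ) ^ 2) :=
  stmt_10_general N r b hr hrm hb D hD P hP Pk hPk a haanti haroots
end

section
/- If a_1 denotes the unique root of P_N in the interval (−r_1, ∞) and B := max_{1≤i≤N} b_i, then a_1 ≤ N·B/D. -/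
open Polynomial

/-- If `a₁` denotes the unique root of `P_N` in `(-r_1, ∞)` and
`B := max_{1≤i≤N} b_i`, then `a₁ ≤ N·B/D`. -/
theorem stmt_12 (N : ℕ) (hN : 0 < N) (r b : Fin N → ℝ)
    (hr : ∀ i, 0 < r i) (hrm : StrictMono r) (hb : ∀ i, 0 < b i)
    (D : ℝ) (hD : 0 < D)
    (P : Polynomial ℝ)
    (hP : P = C D * ∏ j, (X + C (r j)) -
      ∑ i, C (b i) * ∏ j ∈ Finset.univ.erase i, (X + C (r j)))
    (a₁ : ℝ) (ha₁ : a₁ ∈ Set.Ioi (-(r ⟨0, hN⟩))) (ha₁root : P.eval a₁ = 0)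
    (B : ℝ) (hB : B = Finset.univ.sup' ⟨⟨0, hN⟩, Finset.mem_univ _⟩ b) :
    a₁ ≤ (N : ℝ) * B / D := by
  have hBpos : 0 < B := by
    have := Finset.le_sup' b (Finset.mem_univ (⟨0, hN⟩ : Fin N))
    rw [hB]; exact lt_of_lt_of_le (hb _) this
  rcases le_or_gt a₁ 0 with h0 | h0
  · have : 0 < (N : ℝ) * B / D :=
      div_pos (mul_pos (by exact_mod_cast hN) hBpos) hD
    linarith
  · have hpos : ∀ j, 0 < a₁ + r j := fun j => by have := hr j; linarith
    have hprod : 0 < ∏ j, (a₁ + r j) := Finset.prod_pos fun j _ => hpos j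
    have key : D * ∏ j, (a₁ + r j)
        = ∑ i, b i * ∏ j ∈ Finset.univ.erase i, (a₁ + r j) := by
      have := ha₁root
      rw [hP] at this
      simp only [eval_sub, eval_mul, eval_finset_sum, eval_prod, eval_add, eval_C, eval_X] at this
      linarith
    have hterm : ∀ i : Fin N, b i * ∏ j ∈ Finset.univ.erase i, (a₁ + r j)
        ≤ B * ((∏ j, (a₁ + r j)) / a₁) := by
      intro i
      have hBi : b i ≤ B := by rw [hB]; exact Finset.le_sup' b (Finset.mem_univ i)
      have heq : (∏ j ∈ Finset.univ.erase i, (a₁ + r j)) * (a₁ + r i)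
          = ∏ j, (a₁ + r j) := Finset.prod_erase_mul _ _ (Finset.mem_univ i)
      have hle : (∏ j ∈ Finset.univ.erase i, (a₁ + r j))
          ≤ (∏ j, (a₁ + r j)) / a₁ := by
        rw [le_div_iff₀ h0, ← heq]
        have hpe : 0 < ∏ j ∈ Finset.univ.erase i, (a₁ + r j) :=
          Finset.prod_pos fun j _ => hpos j
        have : a₁ ≤ a₁ + r i := by have := hr i; linarith
        nlinarith
      have hpe : 0 ≤ ∏ j ∈ Finset.univ.erase i, (a₁ + r j) :=
        le_of_lt (Finset.prod_pos fun j _ => hpos j)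
      calc b i * ∏ j ∈ Finset.univ.erase i, (a₁ + r j)
          ≤ B * ∏ j ∈ Finset.univ.erase i, (a₁ + r j) :=
            mul_le_mul_of_nonneg_right hBi hpe
        _ ≤ B * ((∏ j, (a₁ + r j)) / a₁) :=
            mul_le_mul_of_nonneg_left hle (le_of_lt hBpos)
    have hsum : D * ∏ j, (a₁ + r j) ≤ (N : ℝ) * (B * ((∏ j, (a₁ + r j)) / a₁)) := by
      rw [key]
      calc ∑ i, b i * ∏ j ∈ Finset.univ.erase i, (a₁ + r j)
          ≤ ∑ _i : Fin N, B * ((∏ j, (a₁ + r j)) / a₁) :=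
            Finset.sum_le_sum fun i _ => hterm i
        _ = (N : ℝ) * (B * ((∏ j, (a₁ + r j)) / a₁)) := by
            simp [Finset.sum_const, mul_comm]
    have hD' : D ≤ (N : ℝ) * B / a₁ := by
      have h1 : D * ∏ j, (a₁ + r j) ≤ ((N : ℝ) * B / a₁) * ∏ j, (a₁ + r j) := by
        calc D * ∏ j, (a₁ + r j) ≤ (N : ℝ) * (B * ((∏ j, (a₁ + r j)) / a₁)) := hsum
          _ = ((N : ℝ) * B / a₁) * ∏ j, (a₁ + r j) := by ring
      exact le_of_mul_le_mul_right h1 hprod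
    rw [le_div_iff₀ hD]
    have := (le_div_iff₀ h0).mp hD'
    nlinarith
end

section
/- Let (D, r_1, …, r_N, b_1, …, b_N) and (D̃, r̃_1, …, r̃_N, b̃_1, …, b̃_N) be two parameter tuples, each satisfying D > 0, D̃ > 0, 0 < r_1 < ⋯ < r_N, 0 < r̃_1 < ⋯ < r̃_N, b_i > 0 and b̃_i > 0 for all i, and let P_N^k and P̃_N^k denote the corresponding polynomials. If there exist integers 1 ≤ k_1 < k_2 such that P_N^{k_1} = P̃_N^{k_1} and P_N^{k_2} = P̃_N^{k_2} as polynomials (equivalently, for each of k = k_1 and k = k_2, the multiset of complex roots of P_N^k counted with multiplicity coincides with that of P̃_N^k), then D = D̃, r_i = r̃_i and b_i = b̃_i for all 1 ≤ i ≤ N. -/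
open Polynomial

lemma strictMono_eq_of_map_eq {N : ℕ} {r r' : Fin N → ℝ}
    (hrm : StrictMono r) (hrm' : StrictMono r')
    (h : Multiset.map r Finset.univ.val = Multiset.map r' Finset.univ.val) : r = r' := by
  have hnd : (Multiset.map r Finset.univ.val).Nodup :=
    (Finset.univ.nodup).map hrm.injective
  let s : Finset ℝ := ⟨Multiset.map r Finset.univ.val, hnd⟩
  have hcard : s.card = N := by simp [s, Finset.card]
  have h1 : ∀ i, r i ∈ s := fun i => Multiset.mem_map_of_mem _ (Finset.mem_univ_val i)
  have h2 : ∀ i, r' i ∈ s := fun i => by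
    show r' i ∈ Multiset.map r Finset.univ.val
    rw [h]; exact Multiset.mem_map_of_mem _ (Finset.mem_univ_val i)
  rw [Finset.orderEmbOfFin_unique hcard h1 hrm,
    Finset.orderEmbOfFin_unique hcard h2 hrm']

lemma prod_X_add_C_inj {N : ℕ} {r r' : Fin N → ℝ}
    (hrm : StrictMono r) (hrm' : StrictMono r')
    (h : ∏ j, (X + C (r j)) = ∏ j, (X + C (r' j))) : r = r' := by
  have key : ∀ (f : Fin N → ℝ), ∏ j, (X + C (f j)) =
      ((Multiset.map (fun j => -(f j)) Finset.univ.val).map fun a => X - C a).prod := by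
    intro f
    rw [Multiset.map_map]
    simp only [Finset.prod, Function.comp, map_neg, sub_neg_eq_add]
  have h2 : Multiset.map (fun j => -(r j)) Finset.univ.val
      = Multiset.map (fun j => -(r' j)) Finset.univ.val := by
    have := congrArg Polynomial.roots h
    rwa [key r, key r', roots_multiset_prod_X_sub_C, roots_multiset_prod_X_sub_C] at this
  apply strictMono_eq_of_map_eq hrm hrm'
  have := congrArg (Multiset.map (fun x : ℝ => -x)) h2
  simpa [Multiset.map_map, Function.comp_def] using this

/-- inverse problem: If two parameter tuples `(D, r, b)` and `(D', r', b')`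
produce the same polynomial `P_N^k` for two distinct values `k₁ < k₂` of `k` (equivalently,
the same multisets of complex roots, since the leading coefficient `1/(2k-1)²` is known),
then the tuples coincide: `D = D'`, `r = r'` and `b = b'`. -/
theorem stmt_16 (N : ℕ) (hN : 0 < N)
    (r b : Fin N → ℝ) (hr : ∀ i, 0 < r i) (hrm : StrictMono r) (hb : ∀ i, 0 < b i)
    (D : ℝ) (hD : 0 < D)
    (r' b' : Fin N → ℝ) (hr' : ∀ i, 0 < r' i) (hrm' : StrictMono r') (hb' : ∀ i, 0 < b' i)
    (D' : ℝ) (hD' : 0 < D')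
    (Pk Pk' : ℕ → Polynomial ℝ)
    (hPk : ∀ k : ℕ, Pk k =
      (C D + C (((2 * (k : ℝ) - 1) ^ 2)⁻¹) * X ^ 2) * ∏ j, (X + C (r j)) -
      ∑ i, C (b i) * ∏ j ∈ Finset.univ.erase i, (X + C (r j)))
    (hPk' : ∀ k : ℕ, Pk' k =
      (C D' + C (((2 * (k : ℝ) - 1) ^ 2)⁻¹) * X ^ 2) * ∏ j, (X + C (r' j)) -
      ∑ i, C (b' i) * ∏ j ∈ Finset.univ.erase i, (X + C (r' j)))
    (k₁ k₂ : ℕ) (hk₁ : 1 ≤ k₁) (hk₁₂ : k₁ < k₂)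
    (heq₁ : Pk k₁ = Pk' k₁) (heq₂ : Pk k₂ = Pk' k₂) :
    D = D' ∧ r = r' ∧ b = b' := by
  rw [hPk k₁, hPk' k₁] at heq₁
  rw [hPk k₂, hPk' k₂] at heq₂
  set c₁ : ℝ := ((2 * (k₁ : ℝ) - 1) ^ 2)⁻¹ with hc₁
  set c₂ : ℝ := ((2 * (k₂ : ℝ) - 1) ^ 2)⁻¹ with hc₂
  -- c₁ ≠ c₂
  have hk1R : (1:ℝ) ≤ (k₁:ℝ) := by exact_mod_cast hk₁
  have hk2R : (k₁:ℝ) < (k₂:ℝ) := by exact_mod_cast hk₁₂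
  have hcne : c₁ ≠ c₂ := by
    have h1 : (0:ℝ) < (2 * (k₁:ℝ) - 1) ^ 2 := by nlinarith
    have h2 : (2 * (k₁:ℝ) - 1) ^ 2 < (2 * (k₂:ℝ) - 1) ^ 2 := by nlinarith
    have := inv_strictAnti₀ h1 h2
    exact fun hc => absurd hc.symm this.ne
  -- step 1: products equal
  have hprodeq : ∏ j, (X + C (r j)) = ∏ j, (X + C (r' j)) := by
    have key : C (c₁ - c₂) * (X ^ 2 * ∏ j, (X + C (r j)))
        = C (c₁ - c₂) * (X ^ 2 * ∏ j, (X + C (r' j))) := by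
      rw [map_sub]
      linear_combination heq₁ - heq₂
    have hC : (C (c₁ - c₂) : ℝ[X]) ≠ 0 :=
      C_ne_zero.mpr (sub_ne_zero.mpr hcne)
    have hX : (X ^ 2 : ℝ[X]) ≠ 0 := pow_ne_zero 2 X_ne_zero
    exact mul_left_cancel₀ hX (mul_left_cancel₀ hC key)
  obtain rfl : r = r' := prod_X_add_C_inj hrm hrm' hprodeq
  -- degree facts
  have hmon : ∀ i : Fin N, (X + C (r i)).Monic := fun i => monic_X_add_C _
  have hPmon : (∏ j, (X + C (r j))).Monic :=
    monic_prod_of_monic _ _ fun i _ => hmon i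
  have hPdeg : (∏ j, (X + C (r j))).natDegree = N := by
    rw [natDegree_prod_of_monic _ _ fun i _ => hmon i]
    simp [natDegree_X_add_C]
  have hEdeg : ∀ i : Fin N,
      (∏ j ∈ Finset.univ.erase i, (X + C (r j))).natDegree = N - 1 := by
    intro i
    rw [natDegree_prod_of_monic _ _ fun j _ => hmon j]
    simp [natDegree_X_add_C, Finset.card_erase_of_mem]
  -- step 2: isolate D and b
  have h3 : C D * ∏ j, (X + C (r j)) - ∑ i, C (b i) * ∏ j ∈ Finset.univ.erase i, (X + C (r j))
      = C D' * ∏ j, (X + C (r j)) - ∑ i, C (b' i) * ∏ j ∈ Finset.univ.erase i, (X + C (r j)) := by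
    linear_combination heq₁
  -- coefficient at N
  have hcoefP : (∏ j, (X + C (r j))).coeff N = 1 := by
    have h := hPmon.coeff_natDegree
    rwa [hPdeg] at h
  have hcoefE : ∀ i : Fin N,
      (∏ j ∈ Finset.univ.erase i, (X + C (r j))).coeff N = 0 := by
    intro i
    apply coeff_eq_zero_of_natDegree_lt
    rw [hEdeg i]
    omega
  have hDD : D = D' := by
    have := congrArg (fun p => p.coeff N) h3
    simpa [coeff_sub, coeff_C_mul, hcoefP, finset_sum_coeff, hcoefE] using this
  subst hDD
  refine ⟨rfl, rfl, ?_⟩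
  -- step 3: sums equal, evaluate
  have h4 : (∑ i, C (b i) * ∏ j ∈ Finset.univ.erase i, (X + C (r j)))
      = ∑ i, C (b' i) * ∏ j ∈ Finset.univ.erase i, (X + C (r j)) := by
    linear_combination -h3
  funext i₀
  have h5 := congrArg (eval (-(r i₀))) h4
  simp only [eval_finset_sum, eval_mul, eval_C, eval_prod, eval_add, eval_X] at h5
  have hz : ∀ i : Fin N, i ≠ i₀ →
      (∏ j ∈ Finset.univ.erase i, (-(r i₀) + r j)) = 0 := by
    intro i hi
    apply Finset.prod_eq_zero (Finset.mem_erase.mpr ⟨hi.symm, Finset.mem_univ _⟩)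
    ring
  rw [Finset.sum_eq_single i₀ (fun i _ hi => by rw [hz i hi, mul_zero]) (by simp),
    Finset.sum_eq_single i₀ (fun i _ hi => by rw [hz i hi, mul_zero]) (by simp)] at h5
  have hQ : (∏ j ∈ Finset.univ.erase i₀, (-(r i₀) + r j)) ≠ 0 := by
    apply Finset.prod_ne_zero_iff.mpr
    intro j hj
    have : r j ≠ r i₀ := fun h => (Finset.mem_erase.mp hj).1 (hrm.injective h)
    intro hc
    exact this (by linarith)
  exact mul_right_cancel₀ hQ h5
end
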